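/- arXiv:1602.04967 — 6 statements merged into one kernel-verified Lean document; each statement's English description precedes it below -/
import Mathlib

section
/- Let A be a finite set of odd cardinality with |A| ≥ 3, and let n ≥ 4. Then the full symmetric group Sym(A^n) is exactly the subgroup of Sym(A^n) generated by all extensions to arity n of permutations of A^4. -/
/-!
For `m : A^ι → ℤ` not depending on coordinate `t`, let `c_t(m, τ)` apply `τ ^ m x` to coordinate
`t` of `x`; for a subgroup `G`, the `m` with `c_t(m, τ) ∈ G` form an additive group. Extensions of
permutations of `A^ℓ`, `ℓ ≥ 2`, give the exponents `[x_s = b]`. Suppose `[C]` is an exponent for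
every `τ` and every target outside the wires of `C`. Conjugating `c_t([x_s = b], τ)` by
`c_s([C], swap b w)` shows that `[C ∧ x_s = w] - [C ∧ x_s = b]` is an exponent; summing over `w`
and subtracting `[C]` leaves `|A| • [C ∧ x_s = b]`. For an involution `τ` every `2 • m` is an
exponent, so for odd `|A|` so is `[C ∧ x_s = b]`, first for transpositions `τ` and then for all `τ`.
Controlling by all wires but `t` yields the transpositions of adjacent points of the Hamming graph
on `A^ι`, and these generate `Sym(A^ι)`.
-/

/-- The wire permutation `π_α` of `A^n` induced by `α ∈ S_n`: `π_α(x) i = x (α⁻¹ i)`. -/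
def wirePerm {A : Type*} {n : ℕ} (α : Equiv.Perm (Fin n)) : Equiv.Perm (Fin n → A) :=
  Equiv.arrowCongr α (Equiv.refl A)

/-- Splitting `A^(k+ℓ)` into `A^k × A^ℓ`. -/
def splitEquiv (A : Type*) (k ℓ : ℕ) : (Fin (k + ℓ) → A) ≃ (Fin k → A) × (Fin ℓ → A) :=
  (Equiv.arrowCongr finSumFinEquiv.symm (Equiv.refl A)).trans
    (Equiv.sumArrowEquivProdArrow _ _ A)

/-- `f ⊕ id`: the permutation of `A^n` acting as `f` on the first `ℓ` coordinates and
fixing the remaining ones. -/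
def oplusId {A : Type*} {ℓ n : ℕ} (h : ℓ ≤ n) (f : Equiv.Perm (Fin ℓ → A)) :
    Equiv.Perm (Fin n → A) :=
  (((Equiv.arrowCongr (finCongr (Nat.add_sub_cancel' h).symm) (Equiv.refl A)).trans
    (splitEquiv A ℓ (n - ℓ))).symm).permCongr
      (Equiv.prodCongr f (Equiv.refl (Fin (n - ℓ) → A)))

/-- `g ∈ Sym(A^n)` is an extension of `f ∈ Sym(A^ℓ)` iff it is a conjugate of `f ⊕ id`
by a wire permutation. -/
def IsExtensionOf {A : Type*} {ℓ n : ℕ} (f : Equiv.Perm (Fin ℓ → A))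
    (g : Equiv.Perm (Fin n → A)) : Prop :=
  ∃ (h : ℓ ≤ n) (α : Equiv.Perm (Fin n)),
    g = wirePerm α * oplusId h f * (wirePerm α)⁻¹

open Equiv Function

section ControlledPerm

variable {ι A : Type*} [DecidableEq ι]

def controlledPerm (t : ι) (σ : (ι → A) → Perm A) (hσ : ∀ x a, σ (update x t a) = σ x) :
    Perm (ι → A) where
  toFun x := update x t (σ x (x t))
  invFun x := update x t ((σ x)⁻¹ (x t))
  left_inv x := by simp [hσ]
  right_inv x := by simp [hσ]

variable {t : ι} {σ σ' : (ι → A) → Perm A} {hσ : ∀ x a, σ (update x t a) = σ x}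

@[simp]
lemma controlledPerm_apply (x : ι → A) : controlledPerm t σ hσ x = update x t (σ x (x t)) := rfl

lemma controlledPerm_inv_apply (x : ι → A) :
    (controlledPerm t σ hσ)⁻¹ x = update x t ((σ x)⁻¹ (x t)) := rfl

lemma controlledPerm_one : controlledPerm t (fun _ => (1 : Perm A)) (fun _ _ => rfl) = 1 := by
  ext x : 1
  simp

lemma controlledPerm_mul {hσ' : ∀ x a, σ' (update x t a) = σ' x}
    (hσσ' : ∀ x a, (σ * σ') (update x t a) = (σ * σ') x) :
    controlledPerm t σ hσ * controlledPerm t σ' hσ' = controlledPerm t (σ * σ') hσσ' := by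
  ext x : 1
  simp [hσ]

lemma controlledPerm_conj {g : Perm (ι → A)} (hg : ∀ x a, g (update x t a) = update (g x) t a)
    (h : ∀ x a, σ (g⁻¹ (update x t a)) = σ (g⁻¹ x)) :
    g * controlledPerm t σ hσ * g⁻¹ = controlledPerm t (fun x => σ (g⁻¹ x)) h := by
  ext x : 1
  have hgt : (g⁻¹ x) t = x t := by
    simpa using congrFun (hg (g⁻¹ x) ((g⁻¹ x) t)).symm t
  change g (controlledPerm t σ hσ (g⁻¹ x)) = _
  rw [controlledPerm_apply, hg, hgt]
  simp

lemma controlledPerm_update_of_ne {s : ι} {σ : (ι → A) → Perm A}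
    {hσ : ∀ x a, σ (update x s a) = σ x} (hst : s ≠ t) (hσt : ∀ x a, σ (update x t a) = σ x)
    (x : ι → A) (a : A) :
    controlledPerm s σ hσ (update x t a) = update (controlledPerm s σ hσ x) t a := by
  simp [hσt, update_comm hst, update_of_ne hst]

end ControlledPerm

section ControlExponents

variable {ι A : Type*} [DecidableEq ι]

def controlExponents (G : Subgroup (Perm (ι → A))) (t : ι) (τ : Perm A) :
    AddSubgroup ((ι → A) → ℤ) where
  carrier := {m | ∃ hm : ∀ x a, m (update x t a) = m x,
    controlledPerm t (fun x => τ ^ m x) (by simp [hm]) ∈ G}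
  zero_mem' := ⟨fun _ _ => rfl, by simp [controlledPerm_one]⟩
  add_mem' := by
    rintro m m' ⟨hm, hmG⟩ ⟨hm', hm'G⟩
    refine ⟨by simp [hm, hm'], ?_⟩
    convert mul_mem hmG hm'G using 1
    rw [controlledPerm_mul fun x a => by simp [hm, hm']]
    congr 1
    ext1 x
    exact zpow_add τ (m x) (m' x)
  neg_mem' := by
    rintro m ⟨hm, hmG⟩
    refine ⟨by simp [hm], ?_⟩
    convert inv_mem hmG using 1
    rw [eq_inv_iff_mul_eq_one, controlledPerm_mul fun x a => by simp [hm]]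
    ext x : 1
    simp

variable {G : Subgroup (Perm (ι → A))} {t : ι} {τ : Perm A}

lemma two_nsmul_mem_controlExponents (hτ : τ ^ 2 = 1) {m : (ι → A) → ℤ}
    (hm : ∀ x a, m (update x t a) = m x) : 2 • m ∈ controlExponents G t τ := by
  refine ⟨by simp [hm], ?_⟩
  convert G.one_mem
  simp [zpow_mul, hτ, controlledPerm_one]

lemma comp_inv_mem_controlExponents {g : Perm (ι → A)} (hgG : g ∈ G)
    (hg : ∀ x a, g (update x t a) = update (g x) t a) {m : (ι → A) → ℤ}
    (hm : m ∈ controlExponents G t τ) : (fun x => m (g⁻¹ x)) ∈ controlExponents G t τ := by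
  obtain ⟨hm, hmG⟩ := hm
  have hg' : ∀ x a, g⁻¹ (update x t a) = update (g⁻¹ x) t a := fun x a => by
    rw [Perm.inv_eq_iff_eq, hg]
    simp
  refine ⟨by simp [hg', hm], ?_⟩
  convert mul_mem (mul_mem hgG hmG) (inv_mem hgG) using 1
  exact (controlledPerm_conj (σ := fun x => τ ^ m x) hg _).symm

end ControlExponents

section Induction

variable {ι A : Type*} [DecidableEq ι] [DecidableEq A]

def agreeIndicator (S : Finset ι) (p x : ι → A) : ℤ := if ∀ i ∈ S, x i = p i then 1 else 0

lemma agreeIndicator_update {S : Finset ι} {t : ι} (ht : t ∉ S) (p x : ι → A) (a : A) :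
    agreeIndicator S p (update x t a) = agreeIndicator S p x := by
  have : ∀ i ∈ S, update x t a i = x i := fun i hi => update_of_ne (ne_of_mem_of_not_mem hi ht) _ _
  simp +contextual [agreeIndicator, this]

lemma agreeIndicator_insert_update {S : Finset ι} {s : ι} (hs : s ∉ S) (p x : ι → A) (w : A) :
    agreeIndicator (insert s S) (update p s w) x = if x s = w then agreeIndicator S p x else 0 := by
  have : ∀ i ∈ S, update p s w i = p i := fun i hi => update_of_ne (ne_of_mem_of_not_mem hi hs) _ _
  by_cases hw : x s = w <;> simp +contextual [agreeIndicator, hw, this]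

variable {G : Subgroup (Perm (ι → A))} {t : ι}

lemma mem_controlExponents_of_forall_isSwap [Finite A] {m : (ι → A) → ℤ}
    (hm : ∀ x a, m (update x t a) = m x) (hm01 : ∀ x, m x = 0 ∨ m x = 1)
    (h : ∀ τ : Perm A, τ.IsSwap → m ∈ controlExponents G t τ) (τ : Perm A) :
    m ∈ controlExponents G t τ := by
  have hτ : τ ∈ Subgroup.closure {σ : Perm A | σ.IsSwap} := by
    rw [Perm.closure_isSwap]; trivial
  induction hτ using Subgroup.closure_induction with
  | mem σ hσ => exact h σ hσ
  | one => exact ⟨hm, by simp [controlledPerm_one]⟩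
  | mul σ σ' _ _ hσ hσ' =>
    obtain ⟨_, hσ⟩ := hσ
    obtain ⟨_, hσ'⟩ := hσ'
    refine ⟨hm, ?_⟩
    convert mul_mem hσ hσ' using 1
    rw [controlledPerm_mul fun x a => by simp [hm]]
    congr 1
    ext1 x
    rcases hm01 x with h | h <;> simp [h]
  | inv σ _ hσ =>
    obtain ⟨_, hσ⟩ := hσ
    refine ⟨hm, ?_⟩
    convert inv_mem hσ using 1
    rw [eq_inv_iff_mul_eq_one, controlledPerm_mul fun x a => by simp [hm]]
    ext x : 1
    rcases hm01 x with h | h <;> simp [h]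

lemma agreeIndicator_insert_mem_of_sq_eq_one [Fintype A] (hodd : Odd (Fintype.card A))
    (h2 : ∀ s t, s ≠ t → ∀ (p : ι → A) τ, agreeIndicator {s} p ∈ controlExponents G t τ)
    {S : Finset ι} {s : ι} (hs : s ∉ S) (hst : s ≠ t) (ht : t ∉ S) (p : ι → A)
    (ih : ∀ t ∉ S, ∀ τ, agreeIndicator S p ∈ controlExponents G t τ) {τ : Perm A}
    (hτ : τ ^ 2 = 1) : agreeIndicator (insert s S) p ∈ controlExponents G t τ := by
  set K := controlExponents G t τ
  set D : A → (ι → A) → ℤ := fun w => agreeIndicator (insert s S) (update p s w)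
  have hdiff : ∀ w, D w - D (p s) ∈ K := by
    intro w
    obtain ⟨hZs, hZ⟩ := ih s hs (swap (p s) w)
    have hV := h2 s t hst p τ
    have hZt : ∀ x a, swap (p s) w ^ agreeIndicator S p (update x t a) =
        swap (p s) w ^ agreeIndicator S p x := by simp [agreeIndicator_update ht]
    have hZ_update := controlledPerm_update_of_ne
      (σ := fun x => swap (p s) w ^ agreeIndicator S p x) (hσ := by simp [hZs]) hst hZt
    convert sub_mem (comp_inv_mem_controlExponents hZ hZ_update hV) hV using 1
    ext x
    simp only [Pi.sub_apply, D, agreeIndicator_insert_update hs, controlledPerm_inv_apply]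
    by_cases hC : ∀ i ∈ S, x i = p i
    · simp only [agreeIndicator, if_pos hC]
      simp [swap_apply_eq_iff]
    · simp only [agreeIndicator, if_neg hC]
      simp
  have hsum : ∑ w, (D w - D (p s)) = agreeIndicator S p - Fintype.card A • D (p s) := by
    ext x
    simp [D, agreeIndicator_insert_update hs, Finset.sum_sub_distrib]
  have hq : Fintype.card A • D (p s) ∈ K := by
    have := sub_mem (ih t ht τ) (sum_mem fun w (_ : w ∈ Finset.univ) => hdiff w)
    rwa [hsum, sub_sub_cancel] at this
  have h2D : 2 • D (p s) ∈ K :=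
    two_nsmul_mem_controlExponents hτ (agreeIndicator_update (by simp [hst.symm, ht]) _)
  obtain ⟨k, hk⟩ := hodd
  have hD : D (p s) = Fintype.card A • D (p s) - k • 2 • D (p s) := by
    rw [hk, smul_smul, mul_comm k, add_smul, one_smul, add_sub_cancel_left]
  have hDp : D (p s) = agreeIndicator (insert s S) p := by simp [D]
  rw [← hDp, hD]
  exact sub_mem hq (nsmul_mem h2D k)

end Induction

section Generation

variable {ι A : Type*} [DecidableEq ι] [DecidableEq A] {G : Subgroup (Perm (ι → A))}

theorem agreeIndicator_mem_controlExponents [Fintype A] (hodd : Odd (Fintype.card A))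
    (h2 : ∀ s t, s ≠ t → ∀ (p : ι → A) τ, agreeIndicator {s} p ∈ controlExponents G t τ)
    {S : Finset ι} (hS : S.Nonempty) (p : ι → A) :
    ∀ t ∉ S, ∀ τ, agreeIndicator S p ∈ controlExponents G t τ := by
  induction hS using Finset.Nonempty.cons_induction with
  | singleton s => exact fun t ht τ => h2 s t (Ne.symm (Finset.notMem_singleton.mp ht)) p τ
  | cons s S hs _ ih =>
    intro t ht τ
    rw [Finset.cons_eq_insert] at ht ⊢
    rw [Finset.mem_insert, not_or] at ht
    refine mem_controlExponents_of_forall_isSwap (agreeIndicator_update ?_ p) (fun x => ?_)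
      (fun τ hτ => ?_) τ
    · simp [ht]
    · unfold agreeIndicator
      split_ifs <;> simp
    · obtain ⟨a, b, -, rfl⟩ := hτ
      exact agreeIndicator_insert_mem_of_sq_eq_one hodd h2 hs (Ne.symm ht.1) ht.2 p ih
        (by rw [sq, swap_mul_self])

variable [Fintype ι]

lemma swap_update_eq_controlledPerm (x : ι → A) (t : ι) (a : A) :
    swap x (update x t a) = controlledPerm t
      (fun y => swap (x t) a ^ agreeIndicator (Finset.univ.erase t) x y)
      (fun y b => by rw [agreeIndicator_update (Finset.notMem_erase t _)]) := by
  ext y : 1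
  by_cases hy : ∀ i ∈ Finset.univ.erase t, y i = x i
  · have hxy : update x t (y t) = y := by
      funext i
      by_cases hi : i = t
      · subst hi; simp
      · simp [hi, hy i (by simp [hi])]
    rw [← hxy, controlledPerm_apply, agreeIndicator_update (Finset.notMem_erase t _),
      agreeIndicator, if_pos fun _ _ => rfl, zpow_one, update_self, update_idem,
      (update_injective x t).map_swap, update_eq_self]
  · have hyx : y ≠ x := fun h => hy fun i _ => by rw [h]
    have hya : y ≠ update x t a := fun h => hy fun i hi => by
      rw [h, update_of_ne (Finset.ne_of_mem_erase hi)]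
    rw [controlledPerm_apply, agreeIndicator, if_neg hy, zpow_zero, Perm.one_apply, update_eq_self,
      swap_apply_of_ne_of_ne hyx hya]

theorem eq_top_of_agreeIndicator_erase_mem [Finite A]
    (h : ∀ t (p : ι → A) τ, agreeIndicator (Finset.univ.erase t) p ∈ controlExponents G t τ) :
    G = ⊤ := by
  have hedge : ∀ (x : ι → A) t a, Equiv.swap x (update x t a) ∈ G := fun x t a => by
    obtain ⟨_, hG⟩ := h t x (swap (x t) a)
    rw [swap_update_eq_controlledPerm]
    exact hG
  have hswap : ∀ F : Finset ι, ∀ x y : ι → A, (∀ i ∉ F, x i = y i) → swap x y ∈ G := by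
    intro F
    induction F using Finset.induction_on with
    | empty =>
      intro x y hxy
      rw [funext fun i => hxy i (Finset.notMem_empty i), swap_self]
      exact G.one_mem
    | insert i F _ ih =>
      intro x y hxy
      refine SubmonoidClass.swap_mem_trans G (b := update y i (x i)) (ih _ _ fun j hj => ?_)
        (swap_comm y _ ▸ hedge y i (x i))
      by_cases hji : j = i
      · simp [hji]
      · simp [hji, hxy j (by simp [hji, hj])]
  rw [eq_top_iff, ← Perm.closure_isSwap, Subgroup.closure_le]
  rintro _ ⟨x, y, -, rfl⟩
  exact hswap Finset.univ x y (by simp)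

theorem eq_top_of_agreeIndicator_singleton_mem [Fintype A] [Nontrivial ι]
    (hodd : Odd (Fintype.card A))
    (h2 : ∀ s t, s ≠ t → ∀ (p : ι → A) τ, agreeIndicator {s} p ∈ controlExponents G t τ) :
    G = ⊤ :=
  eq_top_of_agreeIndicator_erase_mem fun t p τ =>
    have ⟨s, hs⟩ := exists_ne t
    agreeIndicator_mem_controlExponents hodd h2 ⟨s, by simp [hs]⟩ p t
      (Finset.notMem_erase t _) τ

end Generation

section Extensions

variable {A : Type*} {ℓ n : ℕ}

def extensionClosure (A : Type*) (ℓ n : ℕ) : Subgroup (Perm (Fin n → A)) :=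
  Subgroup.closure {g | ∃ f : Perm (Fin ℓ → A), IsExtensionOf f g}

lemma wirePerm_apply (α : Perm (Fin n)) (x : Fin n → A) (j : Fin n) :
    wirePerm α x j = x (α⁻¹ j) := rfl

lemma wirePerm_inv_apply (α : Perm (Fin n)) (x : Fin n → A) (j : Fin n) :
    (wirePerm α)⁻¹ x j = x (α j) := by
  simp [wirePerm, Perm.inv_def, arrowCongr_symm]

lemma oplusId_apply_castAdd (h : ℓ ≤ n) (f : Perm (Fin ℓ → A)) (x : Fin n → A) (k : Fin ℓ) :
    oplusId h f x (Fin.cast (Nat.add_sub_cancel' h) (Fin.castAdd (n - ℓ) k)) =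
      f (fun k => x (Fin.castLE h k)) k := by
  simp only [oplusId, splitEquiv, sumArrowEquivProdArrow, symm_trans, symm_mk, arrowCongr_symm,
    symm_symm, refl_symm, finCongr_symm, permCongr_apply, trans_apply, coe_fn_mk, prodCongr_apply,
    coe_refl, Prod.map_apply, id_eq, arrowCongr_apply, comp_apply, finCongr_apply, Fin.cast_cast,
    Fin.cast_eq_self, finSumFinEquiv_symm_apply_castAdd, Sum.elim_inl]
  rfl

lemma oplusId_apply_natAdd (h : ℓ ≤ n) (f : Perm (Fin ℓ → A)) (x : Fin n → A) (k : Fin (n - ℓ)) :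
    oplusId h f x (Fin.cast (Nat.add_sub_cancel' h) (Fin.natAdd ℓ k)) =
      x (Fin.cast (Nat.add_sub_cancel' h) (Fin.natAdd ℓ k)) := by
  simp [oplusId, splitEquiv, sumArrowEquivProdArrow, permCongr_apply]

lemma oplusId_apply (h : ℓ ≤ n) (f : Perm (Fin ℓ → A)) (x : Fin n → A) (j : Fin n) :
    oplusId h f x j =
      if hj : (j : ℕ) < ℓ then f (fun k => x (Fin.castLE h k)) ⟨j, hj⟩ else x j := by
  split_ifs with hj
  · have hj' : j = Fin.cast (Nat.add_sub_cancel' h) (Fin.castAdd (n - ℓ) ⟨j, hj⟩) := by ext; simp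
    conv_lhs => rw [hj', oplusId_apply_castAdd]
  · have hj' : j = Fin.cast (Nat.add_sub_cancel' h) (Fin.natAdd ℓ ⟨j - ℓ, by omega⟩) := by
      ext; simp; omega
    rw [hj', oplusId_apply_natAdd]

lemma conj_oplusId_apply (h : ℓ ≤ n) (α : Perm (Fin n)) (f : Perm (Fin ℓ → A)) (x : Fin n → A)
    (j : Fin n) : (wirePerm α * oplusId h f * (wirePerm α)⁻¹ : Perm (Fin n → A)) x j =
      if hj : (α⁻¹ j : ℕ) < ℓ then f (fun k => x (α (Fin.castLE h k))) ⟨α⁻¹ j, hj⟩ else x j := by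
  simp only [Perm.mul_apply, wirePerm_apply, oplusId_apply, wirePerm_inv_apply]
  split_ifs <;> simp

lemma controlledPerm_mem_extensionClosure (h : ℓ ≤ n) (α : Perm (Fin n)) (k₀ : Fin ℓ)
    {σ : (Fin ℓ → A) → Perm A} (hσ : ∀ y a, σ (update y k₀ a) = σ y)
    (hσ' : ∀ (x : Fin n → A) (a : A),
      σ (fun k => update x (α (Fin.castLE h k₀)) a (α (Fin.castLE h k))) =
        σ (fun k => x (α (Fin.castLE h k)))) :
    controlledPerm (α (Fin.castLE h k₀)) (fun x => σ (fun k => x (α (Fin.castLE h k)))) hσ' ∈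
      extensionClosure A ℓ n := by
  refine Subgroup.subset_closure ⟨controlledPerm k₀ σ hσ, h, α, ?_⟩
  ext x j
  rw [conj_oplusId_apply]
  split_ifs with hj
  · have hk : j = α (Fin.castLE h k₀) ↔ (⟨_, hj⟩ : Fin ℓ) = k₀ := by
      rw [← Perm.inv_eq_iff_eq, Fin.ext_iff, Fin.ext_iff, Fin.val_castLE]
    have hj' : α (Fin.castLE h ⟨_, hj⟩) = j := by simp [Fin.castLE]
    simp only [controlledPerm_apply, update_apply, hk, hj']
  · have hk : j ≠ α (Fin.castLE h k₀) := by
      rintro rfl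
      simp at hj
    simp [hk]

variable [DecidableEq A]

lemma agreeIndicator_singleton_mem_extensionClosure (hℓ : 2 ≤ ℓ) (h : ℓ ≤ n) {s t : Fin n}
    (hst : s ≠ t) (p : Fin n → A) (τ : Perm A) :
    agreeIndicator {s} p ∈ controlExponents (extensionClosure A ℓ n) t τ := by
  let k₀ : Fin ℓ := ⟨0, by omega⟩
  let k₁ : Fin ℓ := ⟨1, by omega⟩
  obtain ⟨α, hα⟩ := Perm.exists_extending_pair ![Fin.castLE h k₀, Fin.castLE h k₁] ![s, t]
    (by intro i j; fin_cases i <;> fin_cases j <;> simp [k₀, k₁, Fin.ext_iff])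
    (by intro i j; fin_cases i <;> fin_cases j <;> simp [hst, hst.symm])
  have hs : α (Fin.castLE h k₀) = s := hα 0
  have ht : α (Fin.castLE h k₁) = t := hα 1
  subst hs ht
  refine ⟨agreeIndicator_update (by simpa using hst.symm) p, ?_⟩
  convert controlledPerm_mem_extensionClosure h α k₁
    (σ := fun y => τ ^ if y k₀ = p (α (Fin.castLE h k₀)) then (1 : ℤ) else 0) ?_ ?_ using 2
  · ext x
    simp [agreeIndicator]
  · have hk : k₀ ≠ k₁ := by simp [k₀, k₁, Fin.ext_iff]
    intro y a
    simp [update_of_ne hk]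
  · have hk : α (Fin.castLE h k₀) ≠ α (Fin.castLE h k₁) := by simp [k₀, k₁, Fin.ext_iff]
    intro x a
    simp [update_of_ne hk]

theorem extensionClosure_eq_top [Fintype A] (hodd : Odd (Fintype.card A)) (hℓ : 2 ≤ ℓ)
    (h : ℓ ≤ n) : extensionClosure A ℓ n = ⊤ :=
  have : Nontrivial (Fin n) := Fin.nontrivial_iff_two_le.mpr (hℓ.trans h)
  eq_top_of_agreeIndicator_singleton_mem hodd fun _ _ hst =>
    agreeIndicator_singleton_mem_extensionClosure hℓ h hst

end Extensions

theorem stmt1_general (A : Type*) [Fintype A] [DecidableEq A]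
    (hodd : Odd (Fintype.card A))
    (n : ℕ) (hn : 4 ≤ n) :
    Subgroup.closure
      {g : Equiv.Perm (Fin n → A) | ∃ f : Equiv.Perm (Fin 4 → A), IsExtensionOf f g} = ⊤ :=
  extensionClosure_eq_top hodd (by norm_num) hn

/-- For `|A|` odd with `|A| ≥ 3` and `n ≥ 4`, the full symmetric group `Sym(A^n)`
is exactly the subgroup generated by all extensions to arity `n` of permutations of `A^4`. -/
theorem stmt1 (A : Type*) [Fintype A] [DecidableEq A]
    (hodd : Odd (Fintype.card A)) (hA : 3 ≤ Fintype.card A)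
    (n : ℕ) (hn : 4 ≤ n) :
    Subgroup.closure
      {g : Equiv.Perm (Fin n → A) | ∃ f : Equiv.Perm (Fin 4 → A), IsExtensionOf f g} = ⊤ :=
  stmt1_general A hodd n hn
end

section
/- Let A be a finite set with |A| ≥ 2, let n ≥ 4, and let f ∈ Sym(A^n) be any permutation. Then the permutation f ⊕ id of A^{n+1} (which applies f to the first n coordinates and fixes the last coordinate) belongs to the subgroup of Sym(A^{n+1}) generated by all extensions to arity n+1 of permutations of A^4. (In other words, every permutation is computable from a finite gate set using one borrowed bit.) -/
/-!
Let `H` be the group generated by the extensions of `k`-ary gates, `3 ≤ k ≤ n + 1`. The alternating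
group of `A^(n+1)` lies in `H`. Indeed, if the three points of a 3-cycle do not all agree on at
least `k` wires, a `k`-ary gate on `k` of these wires conjugates it into a 3-cycle whose points
agree on one more wire. If they differ on fewer than `k` wires, the 3-cycle is an even permutation
of a window of `k - 1` wires, controlled by the values of all other wires. Controls are added one
at a time: the commutator of a gate controlled by one wire and a gate controlled by a set `S` of
wires is controlled by both, and every 3-cycle `σ` is a commutator `⁅g, σ⁆`.

This settles the case of an even `f ⊕ id`. Otherwise `sign (f ⊕ id) = sign f ^ |A|` forces `|A|` to
be odd, so the extension of a transposition of `A^k` is odd as well, and multiplying by it reduces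
to the even case.
-/

open Equiv Function
open scoped commutatorElement

lemma Finset.exists_perm_mapsTo {α : Type*} [Fintype α] [DecidableEq α] {s t : Finset α}
    (h : s.card ≤ t.card) : ∃ σ : Perm α, ∀ a ∈ s, σ a ∈ t := by
  obtain ⟨t', ht', hcard⟩ := Finset.exists_subset_card_eq h
  let e : {a // a ∈ s} ≃ {a // a ∈ t'} := Fintype.equivOfCardEq (by simp [hcard])
  exact ⟨e.extendSubtype, fun a ha => ht' (e.extendSubtype_mem a ha)⟩

lemma Equiv.Perm.exists_eq_prodCongrLeft {β ρ : Type*} (G : Perm (β × ρ))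
    (hG : ∀ p, (G p).2 = p.2) : ∃ F : ρ → Perm β, G = prodCongrLeft F := by
  have hG' : ∀ b r, G (b, r) = ((G (b, r)).1, r) := fun b r => Prod.ext rfl (hG _)
  have hG'' : ∀ b r, G.symm (b, r) = ((G.symm (b, r)).1, r) := fun b r =>
    Prod.ext rfl (by simpa using (hG (G.symm (b, r))).symm)
  refine ⟨fun r => ⟨fun b => (G (b, r)).1, fun b => (G.symm (b, r)).1, fun b => ?_,
    fun b => ?_⟩, ?_⟩
  · simp only [← hG', symm_apply_apply]
  · simp only [← hG'', apply_symm_apply]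
  · ext ⟨b, r⟩ <;> simp [hG]

lemma Equiv.Perm.exists_eq_prodCongrLeft_mulIndicator {β ρ : Type*} (G : Perm (β × ρ)) (v : ρ)
    (hG : ∀ p, G p ≠ p → p.2 = v) :
    ∃ Y : Perm β, G = prodCongrLeft (({v} : Set ρ).mulIndicator fun _ => Y) := by
  have hsnd : ∀ p, (G p).2 = p.2 := by
    intro p
    by_cases hp : G p = p
    · rw [hp]
    · rw [hG _ (fun h => hp (G.injective h)), hG _ hp]
  obtain ⟨F, hF⟩ := G.exists_eq_prodCongrLeft hsnd
  refine ⟨F v, hF.trans (congrArg _ (funext fun r => ?_))⟩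
  by_cases hr : r = v
  · simp [hr]
  · rw [Set.mulIndicator_of_notMem (by simpa using hr)]
    ext b : 1
    have hfix : G (b, r) = (b, r) := by_contra fun h => hr (hG _ h)
    simpa [hF] using congrArg Prod.fst hfix

lemma Equiv.Perm.IsThreeCycle.exists_commutator_eq {α : Type*} [Fintype α] [DecidableEq α]
    {σ : Perm α} (hσ : σ.IsThreeCycle) : ∃ g : Perm α, ⁅g, σ⁆ = σ := by
  obtain ⟨g, hg⟩ := isConj_iff.mp (Perm.isConj_iff_cycleType_eq.mpr (Perm.cycleType_inv σ).symm)
  refine ⟨g, ?_⟩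
  have h3 : σ ^ 3 = 1 := hσ.orderOf ▸ pow_orderOf_eq_one σ
  rw [commutatorElement_def, hg, ← mul_inv_rev, inv_eq_iff_mul_eq_one, ← pow_three', h3]

lemma Set.mulIndicator_const_commutator {α G : Type*} [Group G] (E₁ E₂ : Set α) (g h : G) :
    ⁅E₁.mulIndicator (fun _ => g), E₂.mulIndicator (fun _ => h)⁆ =
      (E₁ ∩ E₂).mulIndicator fun _ => ⁅g, h⁆ := by
  ext a
  by_cases h₁ : a ∈ E₁ <;> by_cases h₂ : a ∈ E₂ <;> simp [h₁, h₂, commutatorElement_def]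

structure IsLocalOn {ι A : Type*} (W : Set ι) (G : Perm (ι → A)) : Prop where
  apply_of_notMem : ∀ x, ∀ i ∉ W, G x i = x i
  eqOn : ∀ {x y}, Set.EqOn x y W → Set.EqOn (G x) (G y) W

namespace IsLocalOn

variable {ι A : Type*} {W W' : Set ι} {G : Perm (ι → A)}

lemma mono (hG : IsLocalOn W G) (hW : W ⊆ W') : IsLocalOn W' G where
  apply_of_notMem x i hi := hG.apply_of_notMem x i fun h => hi (hW h)
  eqOn {x y} hxy i hi := by
    by_cases hiW : i ∈ W
    · exact hG.eqOn (hxy.mono hW) hiW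
    · rw [hG.apply_of_notMem x i hiW, hG.apply_of_notMem y i hiW]
      exact hxy hi

lemma conj_wirePerm {N : ℕ} {W : Set (Fin N)} {G : Perm (Fin N → A)} (hG : IsLocalOn W G)
    (α : Perm (Fin N)) : IsLocalOn (α ⁻¹' W) ((wirePerm α)⁻¹ * G * wirePerm α) where
  apply_of_notMem x i hi := (hG.apply_of_notMem (x ∘ α.symm) (α i) hi).trans (by simp)
  eqOn {x y} hxy i hi := hG.eqOn (fun j hj => hxy (by simpa using hj)) hi

end IsLocalOn

section OplusId

variable {A : Type*} {ℓ n : ℕ} (h : ℓ ≤ n)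

def oplusSplit : (Fin n → A) ≃ (Fin ℓ → A) × (Fin (n - ℓ) → A) :=
  (arrowCongr (finCongr (Nat.add_sub_cancel' h).symm) (Equiv.refl A)).trans
    (splitEquiv A ℓ (n - ℓ))

lemma oplusId_eq_permCongr (f : Perm (Fin ℓ → A)) :
    oplusId h f = (oplusSplit h).symm.permCongr (prodCongr f (Equiv.refl _)) := rfl

lemma oplusSplit_fst (x : Fin n → A) (j : Fin ℓ) : (oplusSplit h x).1 j = x (Fin.castLE h j) :=
  rfl

lemma oplusSplit_snd (x : Fin n → A) (j : Fin (n - ℓ)) :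
    (oplusSplit h x).2 j = x ⟨ℓ + j, by omega⟩ :=
  rfl

lemma sign_oplusId [Fintype A] [DecidableEq A] (f : Perm (Fin ℓ → A)) :
    Perm.sign (oplusId h f) = Perm.sign f ^ Fintype.card A ^ (n - ℓ) := by
  rw [oplusId_eq_permCongr, Perm.sign_permCongr, prodCongr_refl_right, Perm.sign_prodCongrLeft,
    Finset.prod_const, Finset.card_univ, Fintype.card_fun, Fintype.card_fin]

lemma exists_eq_oplusId [Nonempty A] {G : Perm (Fin n → A)}
    (hG : IsLocalOn {i : Fin n | (i : ℕ) < ℓ} G) : ∃ f, G = oplusId h f := by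
  set e := oplusSplit (A := A) h
  have hsnd : ∀ p, (e.permCongr G p).2 = p.2 := by
    intro p
    ext j
    rw [permCongr_apply, oplusSplit_snd, hG.apply_of_notMem _ _ (by simp),
      ← oplusSplit_snd h (e.symm p), apply_symm_apply]
  obtain ⟨F, hF⟩ := (e.permCongr G).exists_eq_prodCongrLeft hsnd
  have hconst : ∀ r r', F r = F r' := by
    intro r r'
    ext b j
    have hfib : ∀ r, F r b = (e (G (e.symm (b, r)))).1 := fun r => by
      simpa using congrArg (fun g => (g (b, r)).1) hF.symm
    have hwin : ∀ r (i : Fin ℓ), e.symm (b, r) (Fin.castLE h i) = b i := fun r i => by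
      rw [← oplusSplit_fst h (e.symm (b, r))]
      exact congrFun (congrArg Prod.fst (e.apply_symm_apply (b, r))) i
    have hagree : Set.EqOn (e.symm (b, r)) (e.symm (b, r')) {i | (i : ℕ) < ℓ} := by
      intro i (hi : (i : ℕ) < ℓ)
      simpa using (hwin r ⟨i, hi⟩).trans (hwin r' ⟨i, hi⟩).symm
    rw [hfib, hfib, oplusSplit_fst, oplusSplit_fst]
    exact hG.eqOn hagree (by simp)
  obtain ⟨r₀⟩ : Nonempty (Fin (n - ℓ) → A) := inferInstance
  refine ⟨F r₀, ?_⟩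
  rw [oplusId_eq_permCongr, ← permCongr_symm, eq_symm_apply, hF]
  ext ⟨b, r⟩ <;> simp [hconst r r₀]

end OplusId

def gateGroup (A : Type*) (k N : ℕ) : Subgroup (Perm (Fin N → A)) :=
  Subgroup.closure {g | ∃ p : Perm (Fin k → A), IsExtensionOf p g}

section GateGroup

variable {A : Type*} {k N : ℕ}

lemma oplusId_mem_gateGroup (hk : k ≤ N) (f : Perm (Fin k → A)) :
    oplusId hk f ∈ gateGroup A k N :=
  Subgroup.subset_closure ⟨f, hk, 1, by ext; rfl⟩

lemma mem_gateGroup_of_isLocalOn [Nonempty A] (hk : k ≤ N) {W : Finset (Fin N)}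
    (hW : W.card ≤ k) {G : Perm (Fin N → A)} (hG : IsLocalOn ↑W G) : G ∈ gateGroup A k N := by
  obtain ⟨β, hβ⟩ := Finset.exists_perm_mapsTo (s := W) (t := {i | (i : ℕ) < k})
    (by rwa [Fin.card_filter_val_lt, min_eq_right hk])
  have hloc : IsLocalOn {i : Fin N | (i : ℕ) < k} ((wirePerm β⁻¹)⁻¹ * G * wirePerm β⁻¹) :=
    (hG.conj_wirePerm β⁻¹).mono fun i hi => by simpa using hβ _ hi
  obtain ⟨f, hf⟩ := exists_eq_oplusId hk hloc
  refine Subgroup.subset_closure ⟨f, hk, β⁻¹, ?_⟩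
  rw [← hf]
  group

end GateGroup

section WindowGate

variable {ι A : Type*} [DecidableEq ι]

/-- The gate acting on the wires of `s` by `F r`, where `r` is the assignment to the other wires. -/
def windowGate (s : Finset ι) :
    (({i // i ∉ s} → A) → Perm ({i // i ∈ s} → A)) →* Perm (ι → A) :=
  (piEquivPiSubtypeProd (· ∈ s) fun _ => A).symm.permCongrHom.toMonoidHom.comp
    (MonoidHom.mk' prodCongrLeft fun _ _ => by ext ⟨b, r⟩ <;> rfl)

lemma windowGate_eq_permCongr (s : Finset ι)
    (F : ({i // i ∉ s} → A) → Perm ({i // i ∈ s} → A)) :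
    windowGate s F = (piEquivPiSubtypeProd (· ∈ s) fun _ => A).symm.permCongr (prodCongrLeft F) :=
  rfl

variable {s : Finset ι} (F : ({i // i ∉ s} → A) → Perm ({i // i ∈ s} → A)) (x : ι → A)

lemma windowGate_apply_of_mem {i : ι} (hi : i ∈ s) :
    windowGate s F x i = F (fun j => x j) (fun j => x j) ⟨i, hi⟩ := by
  simp [windowGate, hi]

lemma windowGate_apply_of_notMem {i : ι} (hi : i ∉ s) : windowGate s F x i = x i := by
  simp [windowGate, hi]

lemma isLocalOn_windowGate (C : Set ι)
    (hF : ∀ r r', (∀ q : {i // i ∉ s}, ↑q ∈ C → r q = r' q) → F r = F r') :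
    IsLocalOn (↑s ∪ C) (windowGate s F) where
  apply_of_notMem x i hi := windowGate_apply_of_notMem F x fun h => hi (Or.inl h)
  eqOn {x y} hxy i hi := by
    by_cases his : i ∈ s
    · have hrest : F (fun j => x j) = F (fun j => y j) :=
        hF _ _ fun q hq => hxy (Or.inr hq)
      have hwin : (fun j : {i // i ∈ s} => x j) = fun j : {i // i ∈ s} => y j :=
        funext fun j => hxy (Or.inl j.2)
      rw [windowGate_apply_of_mem F x his, windowGate_apply_of_mem F y his, hrest, hwin]
    · rw [windowGate_apply_of_notMem F x his, windowGate_apply_of_notMem F y his]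
      exact hxy hi

noncomputable def ctrlGate (s : Finset ι) (S : Finset {i // i ∉ s}) (v : ι → A) :
    Perm ({i // i ∈ s} → A) →* Perm (ι → A) :=
  (windowGate s).comp
    ((Set.mulIndicatorHom _ {r | ∀ q ∈ S, r q = v q}).comp (Pi.constMonoidHom _ _))

lemma ctrlGate_apply (S : Finset {i // i ∉ s}) (v : ι → A) (Y : Perm ({i // i ∈ s} → A)) :
    ctrlGate s S v Y = windowGate s ({r | ∀ q ∈ S, r q = v q}.mulIndicator fun _ => Y) :=
  rfl

lemma ctrlGate_insert_commutator (q : {i // i ∉ s}) (S : Finset {i // i ∉ s}) (v : ι → A)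
    (P Q : Perm ({i // i ∈ s} → A)) :
    ctrlGate s (insert q S) v ⁅P, Q⁆ = ⁅ctrlGate s {q} v P, ctrlGate s S v Q⁆ := by
  rw [ctrlGate_apply, ctrlGate_apply, ctrlGate_apply, ← map_commutatorElement,
    Set.mulIndicator_const_commutator]
  congr 2
  ext r
  simp

end WindowGate

section Controlled

variable {A : Type*} {k N : ℕ} {s : Finset (Fin N)}

lemma ctrlGate_mem_gateGroup_of_card_le [Nonempty A] (hk : k ≤ N) {S : Finset {i // i ∉ s}}
    (hS : s.card + S.card ≤ k) (v : Fin N → A) (Y : Perm ({i // i ∈ s} → A)) :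
    ctrlGate s S v Y ∈ gateGroup A k N := by
  refine mem_gateGroup_of_isLocalOn hk ((Finset.card_union_le _ _).trans ?_)
    (W := s ∪ S.map (Embedding.subtype _)) ?_
  · simpa using hS
  · push_cast
    rw [ctrlGate_apply]
    refine isLocalOn_windowGate _ _ fun r r' hrr' => ?_
    have hE : r ∈ {r | ∀ q ∈ S, r q = v q} ↔ r' ∈ {r | ∀ q ∈ S, r q = v q} :=
      forall₂_congr fun q hq => by rw [hrr' q ⟨q, hq, rfl⟩]
    by_cases hr : r ∈ {r | ∀ q ∈ S, r q = v q}
    · rw [Set.mulIndicator_of_mem hr, Set.mulIndicator_of_mem (hE.mp hr)]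
    · rw [Set.mulIndicator_of_notMem hr, Set.mulIndicator_of_notMem (mt hE.mpr hr)]

lemma alternatingGroup_le_comap_ctrlGate [Fintype A] [DecidableEq A] [Nonempty A]
    (hk : k ≤ N) (hs : s.card < k) (S : Finset {i // i ∉ s}) (v : Fin N → A) :
    alternatingGroup ({i // i ∈ s} → A) ≤ (gateGroup A k N).comap (ctrlGate s S v) := by
  induction S using Finset.induction_on with
  | empty => exact fun Y _ => ctrlGate_mem_gateGroup_of_card_le hk (by simpa using hs.le) v Y
  | insert q S _ ih =>
    rw [← Perm.closure_three_cycles_eq_alternating, Subgroup.closure_le]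
    intro σ hσ
    obtain ⟨g, hg⟩ := hσ.exists_commutator_eq
    have hq : ctrlGate s {q} v g ∈ gateGroup A k N :=
      ctrlGate_mem_gateGroup_of_card_le hk (by simpa using hs) v g
    have hS : ctrlGate s S v σ ∈ gateGroup A k N := ih hσ.mem_alternatingGroup
    rw [SetLike.mem_coe, Subgroup.mem_comap, ← hg, ctrlGate_insert_commutator,
      commutatorElement_def]
    exact mul_mem (mul_mem (mul_mem hq hS) (inv_mem hq)) (inv_mem hS)

lemma mem_gateGroup_of_sign_eq_one_of_eqOn_compl [Fintype A] [DecidableEq A] [Nonempty A]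
    (hk : k ≤ N) (hs : s.card < k) (v : Fin N → A) {τ : Perm (Fin N → A)}
    (hτ : Perm.sign τ = 1) (hmoved : ∀ x, τ x ≠ x → Set.EqOn x v (↑s)ᶜ) :
    τ ∈ gateGroup A k N := by
  set e := piEquivPiSubtypeProd (· ∈ s) fun _ => A
  set v' : {i // i ∉ s} → A := fun q => v q
  obtain ⟨Y, hY⟩ := (e.permCongr τ).exists_eq_prodCongrLeft_mulIndicator v' fun p hp => by
    have hx : τ (e.symm p) ≠ e.symm p := fun h => hp (by rw [permCongr_apply, h, apply_symm_apply])
    ext q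
    simpa [e, v', q.2] using hmoved _ hx q.2
  have hτY : τ = ctrlGate s Finset.univ v Y := by
    have hv' : {r : {i // i ∉ s} → A | ∀ q ∈ Finset.univ, r q = v q} = {v'} := by
      ext r
      simp [funext_iff, v']
    rw [ctrlGate_apply, hv', windowGate_eq_permCongr, ← hY, ← permCongr_symm, symm_apply_apply]
  have hsign : Perm.sign Y = 1 := by
    rw [← hτ, ← Perm.sign_permCongr e, hY, Perm.sign_prodCongrLeft,
      Fintype.prod_eq_single v' fun r hr => by simp [hr]]
    simp
  rw [hτY]
  exact alternatingGroup_le_comap_ctrlGate hk hs _ v hsign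

end Controlled

def disagreeWires {ι A : Type*} [Fintype ι] [DecidableEq A] (P : Finset (ι → A)) : Finset ι :=
  {i | ∃ x ∈ P, ∃ y ∈ P, x i ≠ y i}

lemma disagreeWires_map_subset_erase {ι A : Type*} [Fintype ι] [DecidableEq ι] [DecidableEq A]
    {P : Finset (ι → A)} {W : Set ι} {G : Perm (ι → A)} (hG : IsLocalOn W G)
    (hW : W ⊆ disagreeWires P) {l : ι} (hl : ∀ x ∈ P, ∀ y ∈ P, G x l = G y l) :
    disagreeWires (P.map G.toEmbedding) ⊆ (disagreeWires P).erase l := by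
  intro i hi
  obtain ⟨x, hx, y, hy, hxy⟩ : ∃ x ∈ P, ∃ y ∈ P, G x i ≠ G y i := by
    simpa only [disagreeWires, Finset.mem_filter, Finset.mem_univ, true_and, Finset.mem_map,
      exists_exists_and_eq_and, Equiv.coe_toEmbedding] using hi
  refine Finset.mem_erase.mpr ⟨fun h => hxy (h ▸ hl x hx y hy), ?_⟩
  by_cases hiW : i ∈ W
  · exact hW hiW
  · rw [hG.apply_of_notMem x i hiW, hG.apply_of_notMem y i hiW] at hxy
    simpa [disagreeWires] using ⟨x, hx, y, hy, hxy⟩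

section Alternating

variable {A : Type*} [Fintype A] [DecidableEq A] {k N : ℕ}

lemma exists_card_disagreeWires_map_lt [Nonempty A] (hk : 0 < k) {P : Finset (Fin N → A)}
    (hP : P.card ≤ Fintype.card A ^ (k - 1)) (hD : k ≤ (disagreeWires P).card) :
    ∃ g ∈ gateGroup A k N,
      (disagreeWires (P.map g.toEmbedding)).card < (disagreeWires P).card := by
  obtain ⟨W, hWD, hWk⟩ := Finset.exists_subset_card_eq hD
  obtain ⟨l, hl⟩ : W.Nonempty := Finset.card_pos.mp (hWk ▸ hk)
  obtain ⟨a₀⟩ := ‹Nonempty A›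
  set T : Finset ({i // i ∈ W} → A) :=
    {u ∈ Fintype.piFinset fun _ => Finset.univ | u ⟨l, hl⟩ = a₀}
  have hT : Fintype.card A ^ (k - 1) = T.card := by
    rw [Fintype.card_filter_piFinset_const_eq_of_mem _ _ (Finset.mem_univ a₀)]
    simp [hWk]
  obtain ⟨σ, hσ⟩ := Finset.exists_perm_mapsTo
    (s := P.image fun x (j : {i // i ∈ W}) => x j) (t := T)
    (Finset.card_image_le.trans (hP.trans hT.le))
  set g := windowGate W fun _ => σ
  have hloc : IsLocalOn ↑W g := by
    simpa using isLocalOn_windowGate (fun _ => σ) ∅ fun _ _ _ => rfl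
  have hgl : ∀ x ∈ P, g x l = a₀ := by
    intro x hx
    rw [windowGate_apply_of_mem _ _ hl]
    simpa [T] using hσ _ (Finset.mem_image_of_mem _ hx)
  have hkN : k ≤ N := by simpa using hD.trans (Finset.card_le_univ _)
  refine ⟨g, mem_gateGroup_of_isLocalOn hkN hWk.le hloc, Finset.card_lt_card ?_⟩
  refine Finset.ssubset_of_subset_of_ssubset ?_ (Finset.erase_ssubset (hWD hl))
  exact disagreeWires_map_subset_erase hloc (by simpa using hWD) fun x hx y hy =>
    (hgl x hx).trans (hgl y hy).symm

lemma Equiv.Perm.IsThreeCycle.mem_gateGroup_of_card_disagreeWires_lt [Nonempty A] (hkN : k ≤ N)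
    {τ : Perm (Fin N → A)} (hτ : τ.IsThreeCycle) (hD : (disagreeWires τ.support).card < k) :
    τ ∈ gateGroup A k N := by
  obtain ⟨s, hDs, -, hs⟩ := Finset.exists_subsuperset_card_eq (n := k - 1)
    (Finset.subset_univ (disagreeWires τ.support)) (by omega) (by simp; omega)
  obtain ⟨x₀, hx₀⟩ : τ.support.Nonempty := Finset.card_pos.mp (by simp [hτ.card_support])
  refine mem_gateGroup_of_sign_eq_one_of_eqOn_compl (s := s) hkN (by omega) x₀ hτ.sign
    fun x hx i hi => ?_
  by_contra hne
  exact hi (hDs (by simpa [disagreeWires] using ⟨x, hx, x₀, Perm.mem_support.mp hx₀, hne⟩))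

theorem alternatingGroup_le_gateGroup (hA : 2 ≤ Fintype.card A) (hk : 3 ≤ k) (hkN : k ≤ N) :
    alternatingGroup (Fin N → A) ≤ gateGroup A k N := by
  have : Nonempty A := Fintype.card_pos_iff.mp (by omega : 0 < Fintype.card A)
  have hsupp : ∀ τ : Perm (Fin N → A), τ.IsThreeCycle →
      τ.support.card ≤ Fintype.card A ^ (k - 1) := fun τ hτ =>
    calc τ.support.card = 3 := hτ.card_support
      _ ≤ 2 ^ 2 := by norm_num
      _ ≤ 2 ^ (k - 1) := Nat.pow_le_pow_right (by norm_num) (by omega)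
      _ ≤ Fintype.card A ^ (k - 1) := Nat.pow_le_pow_left hA _
  rw [← Perm.closure_three_cycles_eq_alternating, Subgroup.closure_le]
  suffices ∀ m, ∀ τ : Perm (Fin N → A), τ.IsThreeCycle →
      (disagreeWires τ.support).card = m → τ ∈ gateGroup A k N from
    fun τ hτ => this _ τ hτ rfl
  intro m
  induction m using Nat.strong_induction_on with
  | _ m ih =>
  intro τ hτ hm
  by_cases hD : (disagreeWires τ.support).card < k
  · exact hτ.mem_gateGroup_of_card_disagreeWires_lt hkN hD
  obtain ⟨g, hg, hlt⟩ :=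
    exists_card_disagreeWires_map_lt (P := τ.support) (by omega) (hsupp τ hτ) (not_lt.mp hD)
  have hconj : g * τ * g⁻¹ ∈ gateGroup A k N := by
    refine ih _ (hm ▸ Perm.support_conj (σ := g) (τ := τ) ▸ hlt) _ ?_ rfl
    rwa [Perm.IsThreeCycle, Perm.cycleType_conj]
  simpa [mul_assoc] using mul_mem (mul_mem (inv_mem hg) hconj) hg

end Alternating

theorem oplusId_mem_gateGroup_succ {A : Type*} [Fintype A] [DecidableEq A]
    (hA : 2 ≤ Fintype.card A) {k n : ℕ} (hk : 3 ≤ k) (hkn : k ≤ n + 1) (f : Perm (Fin n → A)) :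
    oplusId (Nat.le_succ n) f ∈ gateGroup A k (n + 1) := by
  have hAlt := alternatingGroup_le_gateGroup hA hk hkn
  rcases Int.units_eq_one_or (Perm.sign (oplusId (Nat.le_succ n) f)) with hf | hf
  · exact hAlt hf
  have hodd : Odd (Fintype.card A) := by
    by_contra heven
    obtain ⟨m, hm⟩ := Nat.not_odd_iff_even.mp heven
    rw [sign_oplusId, Nat.succ_eq_add_one, Nat.add_sub_cancel_left, pow_one, hm, ← two_mul,
      pow_mul, Int.units_sq, one_pow] at hf
    exact absurd hf (by decide)
  have : Nontrivial A := Fintype.one_lt_card_iff_nontrivial.mp hA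
  have : NeZero k := ⟨by omega⟩
  obtain ⟨u, v, huv⟩ := exists_pair_ne (Fin k → A)
  have hg : Perm.sign (oplusId hkn (swap u v)) = -1 := by
    rw [sign_oplusId, Perm.sign_swap huv, hodd.pow.neg_one_pow]
  have hprod : Perm.sign (oplusId (Nat.le_succ n) f * oplusId hkn (swap u v)) = 1 := by
    rw [map_mul, hf, hg]
    rfl
  simpa using mul_mem (hAlt hprod) (inv_mem (oplusId_mem_gateGroup hkn (swap u v)))

theorem stmt2_general (A : Type*) [Fintype A] (hA : 2 ≤ Fintype.card A)
    (n : ℕ) (hn : 4 ≤ n) (f : Equiv.Perm (Fin n → A)) :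
    oplusId (Nat.le_succ n) f ∈ Subgroup.closure
      {g : Equiv.Perm (Fin (n + 1) → A) | ∃ p : Equiv.Perm (Fin 4 → A), IsExtensionOf p g} := by
  classical
  exact oplusId_mem_gateGroup_succ hA (by norm_num) (by omega) f

/-- For `|A| ≥ 2`, `n ≥ 4` and any `f ∈ Sym(A^n)`, the permutation `f ⊕ id` of
`A^(n+1)` belongs to the subgroup of `Sym(A^(n+1))` generated by all extensions to arity `n+1`
of permutations of `A^4`. -/
theorem stmt2 (A : Type*) [Fintype A] [DecidableEq A] (hA : 2 ≤ Fintype.card A)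
    (n : ℕ) (hn : 4 ≤ n) (f : Equiv.Perm (Fin n → A)) :
    oplusId (Nat.le_succ n) f ∈ Subgroup.closure
      {g : Equiv.Perm (Fin (n + 1) → A) | ∃ p : Equiv.Perm (Fin 4 → A), IsExtensionOf p g} :=
  stmt2_general A hA n hn f
end

section
/- Let V be a finite set and let E be a set of 3-element subsets of V. Let H be the graph on V in which distinct vertices a, b are adjacent iff some member of E contains both a and b. Then the subgroup of Sym(V) generated by the 3-cycles (a b c) over all {a,b,c} ∈ E equals the set of permutations g of V such that (i) for every v ∈ V, g(v) lies in the same connected component of H as v, and (ii) for every connected component C of H, the restriction of g to C is an even permutation of C. -/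
/-!
A hyperedge `{a, b, c}` lies in one component and its 3-cycle is even, so every generator, hence
the generated group `K`, is componentwise even. Conversely, conjugating `(a b c) ∈ K` by the
3-cycle of a hyperedge through an edge `cd` gives `(a b d) ∈ K`, and `(a c d)(a b c) = (a b d)`
handles the edges meeting `{a, b}`; sliding one vertex at a time along walks puts every 3-cycle
of a component into `K`. Finally, a componentwise even `g ≠ 1` moving `a` moves a third point `x`
of the component of `a` (otherwise its restriction would be a transposition), and
`(a x (g a)) * g` fixes `a` and has smaller support, so induction on the support finishes.
-/

def underlyingGraph {V : Type*} (E : Set (Finset V)) : SimpleGraph V where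
  Adj a b := a ≠ b ∧ ∃ e ∈ E, a ∈ e ∧ b ∈ e
  symm := ⟨by
    rintro a b ⟨hab, e, he, ha, hb⟩
    exact ⟨hab.symm, e, he, hb, ha⟩⟩
  loopless := ⟨by rintro a ⟨haa, -⟩; exact haa rfl⟩

open Equiv Equiv.Perm Finset

namespace Equiv.Perm

variable {α : Type*} [DecidableEq α]

/-- `a ↦ b ↦ c ↦ a`. -/
def threeCycle (a b c : α) : Perm α := swap a b * swap b c

section ThreeCycle

variable {a b c d x : α}

theorem threeCycle_apply_left (hab : a ≠ b) (hac : a ≠ c) : threeCycle a b c a = b := by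
  rw [threeCycle, mul_apply, swap_apply_of_ne_of_ne hab hac, swap_apply_left]

theorem threeCycle_apply_right : threeCycle a b c c = a := by
  rw [threeCycle, mul_apply, swap_apply_right, swap_apply_right]

theorem threeCycle_apply_of_ne (hxa : x ≠ a) (hxb : x ≠ b) (hxc : x ≠ c) :
    threeCycle a b c x = x := by
  rw [threeCycle, mul_apply, swap_apply_of_ne_of_ne hxb hxc, swap_apply_of_ne_of_ne hxa hxb]

theorem threeCycle_rotate (hab : a ≠ b) (hbc : b ≠ c) (hac : a ≠ c) :
    threeCycle b c a = threeCycle a b c := by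
  ext x
  simp only [threeCycle, mul_apply, swap_apply_def]
  split_ifs <;> simp_all

theorem threeCycle_inv (hab : a ≠ b) (hbc : b ≠ c) (hac : a ≠ c) :
    (threeCycle a b c)⁻¹ = threeCycle a c b := by
  ext x
  simp only [threeCycle, mul_inv_rev, swap_inv, mul_apply, swap_apply_def]
  split_ifs <;> simp_all

theorem threeCycle_mul_threeCycle (hab : a ≠ b) (hac : a ≠ c) (had : a ≠ d) (hbc : b ≠ c)
    (hbd : b ≠ d) (hcd : c ≠ d) : threeCycle a c d * threeCycle a b c = threeCycle a b d := by
  ext x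
  simp only [threeCycle, mul_apply, swap_apply_def]
  split_ifs <;> simp_all

theorem mul_threeCycle_mul_inv (σ : Perm α) :
    σ * threeCycle a b c * σ⁻¹ = threeCycle (σ a) (σ b) (σ c) := by
  rw [threeCycle, threeCycle, swap_apply_apply, swap_apply_apply]
  group

theorem sign_threeCycle [Fintype α] (hab : a ≠ b) (hbc : b ≠ c) : sign (threeCycle a b c) = 1 := by
  simp [threeCycle, sign_swap hab, sign_swap hbc]

variable {K : Subgroup (Perm α)}

theorem threeCycle_mem_swap_left (hab : a ≠ b) (hbc : b ≠ c) (hac : a ≠ c)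
    (h : threeCycle a b c ∈ K) : threeCycle b a c ∈ K := by
  rw [← threeCycle_rotate hab.symm hac hbc, ← threeCycle_inv hab hbc hac]
  exact inv_mem h

theorem threeCycle_mem_swap_right (hab : a ≠ b) (hbc : b ≠ c) (hac : a ≠ c)
    (h : threeCycle a b c ∈ K) : threeCycle a c b ∈ K :=
  threeCycle_inv hab hbc hac ▸ inv_mem h

theorem threeCycle_mem_trans (hab : a ≠ b) (hac : a ≠ c) (had : a ≠ d) (hbc : b ≠ c)
    (hbd : b ≠ d) (hcd : c ≠ d) (habc : threeCycle a b c ∈ K) (hacd : threeCycle a c d ∈ K) :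
    threeCycle a b d ∈ K :=
  threeCycle_mul_threeCycle hab hac had hbc hbd hcd ▸ mul_mem hacd habc

end ThreeCycle

theorem exists_ne_ne_apply_ne_of_sign_eq_one [Fintype α] {σ : Perm α} (hσ : sign σ = 1) {a : α}
    (ha : σ a ≠ a) : ∃ x, x ≠ a ∧ x ≠ σ a ∧ σ x ≠ x := by
  have hcard : #({a, σ a} : Finset α) < #σ.support := by
    refine card_le_two.trans_lt (lt_of_le_of_ne ?_ fun h => ?_)
    · exact two_le_card_support_of_ne_one fun h => ha (by rw [h, one_apply])
    · rw [(card_support_eq_two.mp h.symm).sign_eq] at hσ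
      exact absurd hσ (by decide)
  obtain ⟨x, hx, hxa⟩ := exists_mem_notMem_of_card_lt_card hcard
  simp only [mem_insert, mem_singleton, not_or] at hxa
  exact ⟨x, hxa.1, hxa.2, mem_support.mp hx⟩

theorem card_support_threeCycle_mul_lt [Fintype α] {g : Perm α} {a x : α} (ha : g a ≠ a)
    (hxa : x ≠ a) (hxga : x ≠ g a) (hx : g x ≠ x) :
    #(threeCycle a x (g a) * g).support < #g.support := by
  have hsub : (threeCycle a x (g a) * g).support ⊆ g.support := by
    intro y hy
    rw [mem_support] at hy ⊢
    intro hgy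
    rw [mul_apply, hgy, threeCycle_apply_of_ne] at hy
    · exact hy rfl
    all_goals rintro rfl
    · exact ha hgy
    · exact hx hgy
    · exact ha (g.injective hgy)
  refine card_lt_card ((ssubset_iff_of_subset hsub).mpr ⟨a, mem_support.mpr ha, ?_⟩)
  rw [mem_support, mul_apply, threeCycle_apply_right, not_not]

end Equiv.Perm

namespace SimpleGraph

variable {V : Type*} [Fintype V] [DecidableEq V] {G : SimpleGraph V}

variable (G) in
open scoped Classical in
def evenOnComponents : Subgroup (Perm V) where
  carrier := {g | ∃ hg : ∀ v, G.Reachable v (g v),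
    ∀ v : V, sign (g.subtypePerm (p := fun x => G.Reachable v x)
      (fun x => ⟨fun hvgx => hvgx.trans (hg x).symm, fun hvx => hvx.trans (hg x)⟩)) = 1}
  one_mem' := ⟨fun _ => Reachable.refl _, fun _ => by rw [subtypePerm_one, map_one]⟩
  mul_mem' := by
    rintro f g ⟨hf, hsf⟩ ⟨hg, hsg⟩
    refine ⟨fun v => (hg v).trans (hf (g v)), fun v => ?_⟩
    have h := congrArg₂ (· * ·) (hsf v) (hsg v)
    rwa [← map_mul, one_mul] at h
  inv_mem' := by
    rintro g ⟨hg, hsg⟩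
    have hg' (v : V) : G.Reachable v (g⁻¹ v) := by simpa using (hg (g⁻¹ v)).symm
    exact ⟨hg', fun v => by rw [subtypePerm_inv, map_inv, hsg, inv_one]⟩

theorem mem_evenOnComponents_of_reachable {f : Perm V} (a : V) (hf : ∀ x, f x ≠ x → G.Reachable a x)
    (hsign : sign f = 1) : f ∈ G.evenOnComponents := by
  classical
  refine ⟨fun v => ?_, fun v => ?_⟩
  · by_cases hv : f v = v
    · rw [hv]
    · exact (hf v hv).symm.trans (hf (f v) fun h => hv (f.injective h))
  by_cases hva : G.Reachable v a
  · rw [sign_subtypePerm _ _ fun x hx => hva.trans (hf x hx), hsign]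
  · convert map_one sign
    ext ⟨x, hx⟩
    by_contra h
    exact hva (hx.trans (hf x h).symm)

theorem threeCycle_mem_evenOnComponents {a b c : V} (hab : a ≠ b) (hbc : b ≠ c)
    (hb : G.Reachable a b) (hc : G.Reachable a c) : threeCycle a b c ∈ G.evenOnComponents := by
  refine mem_evenOnComponents_of_reachable a (fun x hx => ?_) (sign_threeCycle hab hbc)
  by_cases hxa : x = a
  · rw [hxa]
  by_cases hxb : x = b
  · exact hxb ▸ hb
  by_cases hxc : x = c
  · exact hxc ▸ hc
  exact absurd (threeCycle_apply_of_ne hxa hxb hxc) hx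

theorem exists_reachable_apply_ne_of_mem_evenOnComponents {g : Perm V}
    (hg : g ∈ G.evenOnComponents) {a : V} (ha : g a ≠ a) :
    ∃ x, G.Reachable a x ∧ x ≠ a ∧ x ≠ g a ∧ g x ≠ x := by
  classical
  obtain ⟨hg, hsign⟩ := hg
  obtain ⟨⟨x, hx⟩, hxa, hxga, hgx⟩ :=
    exists_ne_ne_apply_ne_of_sign_eq_one (hsign a) (a := ⟨a, Reachable.refl a⟩)
      (by simpa [Subtype.ext_iff] using ha)
  simp only [ne_eq, Subtype.ext_iff, subtypePerm_apply] at hxa hxga hgx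
  exact ⟨x, hx, hxa, hxga, hgx⟩

theorem evenOnComponents_le {K : Subgroup (Perm V)}
    (hK : ∀ a b c, a ≠ b → b ≠ c → a ≠ c → G.Reachable a b → G.Reachable a c →
      threeCycle a b c ∈ K) : G.evenOnComponents ≤ K := by
  intro g hg
  induction hn : #g.support using Nat.strong_induction_on generalizing g with
  | _ n ih =>
    by_cases hg1 : g = 1
    · exact hg1 ▸ one_mem K
    obtain ⟨a, ha⟩ : ∃ a, g a ≠ a := not_forall.mp fun h => hg1 (Perm.ext h)
    obtain ⟨x, hax, hxa, hxga, hgx⟩ := exists_reachable_apply_ne_of_mem_evenOnComponents hg ha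
    have hga : G.Reachable a (g a) := hg.1 a
    have ht : threeCycle a x (g a) ∈ K := hK a x (g a) hxa.symm hxga (Ne.symm ha) hax hga
    have htg : threeCycle a x (g a) * g ∈ K :=
      ih _ (hn ▸ card_support_threeCycle_mul_lt ha hxa hxga hgx)
        (mul_mem (threeCycle_mem_evenOnComponents hxa.symm hxga hax hga) hg) rfl
    simpa using mul_mem (inv_mem ht) htg

end SimpleGraph

section Hypergraph

variable {V : Type*} [DecidableEq V] {E : Set (Finset V)} {K : Subgroup (Perm V)}

variable (E K) in
def ContainsHyperedgeThreeCycles : Prop :=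
  ∀ a b c, a ≠ b → b ≠ c → a ≠ c → ({a, b, c} : Finset V) ∈ E → threeCycle a b c ∈ K

theorem exists_insert_mem_of_underlyingGraph_adj (hE : ∀ e ∈ E, e.card = 3) {a b : V}
    (h : (underlyingGraph E).Adj a b) : ∃ z, z ≠ a ∧ z ≠ b ∧ ({a, b, z} : Finset V) ∈ E := by
  obtain ⟨hab, e, he, ha, hb⟩ := h
  have hpair : ({a, b} : Finset V) ⊆ e := by simp [insert_subset_iff, ha, hb]
  obtain ⟨z, hz⟩ := card_eq_one.mp <| show #(e \ {a, b}) = 1 by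
    rw [card_sdiff_of_subset hpair, hE e he, card_pair hab]
  have hze : z ∈ e \ {a, b} := hz ▸ mem_singleton_self z
  simp only [mem_sdiff, mem_insert, mem_singleton, not_or] at hze
  obtain ⟨hze, hza, hzb⟩ := hze
  have hsub : ({a, b, z} : Finset V) ⊆ e := by simp [insert_subset_iff, ha, hb, hze]
  have hcard : e.card ≤ ({a, b, z} : Finset V).card := by
    rw [hE e he, card_eq_three.mpr ⟨a, b, z, hab, Ne.symm hza, Ne.symm hzb, rfl⟩]
  exact ⟨z, hza, hzb, eq_of_subset_of_card_le hsub hcard ▸ he⟩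

theorem threeCycle_mem_of_underlyingGraph_adj (hE : ∀ e ∈ E, e.card = 3)
    (hK : ContainsHyperedgeThreeCycles E K) {a b c d : V} (hab : a ≠ b) (hbc : b ≠ c)
    (hac : a ≠ c) (h : threeCycle a b c ∈ K) (hcd : (underlyingGraph E).Adj c d) (hda : d ≠ a)
    (hdb : d ≠ b) : threeCycle a b d ∈ K := by
  obtain ⟨z, hzc, hzd, hz⟩ := exists_insert_mem_of_underlyingGraph_adj hE hcd
  have hcdz := hK c d z hcd.ne hzd.symm hzc.symm hz
  rcases eq_or_ne z a with rfl | hza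
  · rw [threeCycle_rotate hac hcd.ne hda.symm] at hcdz
    exact threeCycle_mem_trans hab hac hda.symm hbc hdb.symm hcd.ne h hcdz
  rcases eq_or_ne z b with rfl | hzb
  · rw [threeCycle_rotate hbc hcd.ne hdb.symm] at hcdz
    exact threeCycle_mem_swap_left hab.symm hda.symm hdb.symm <|
      threeCycle_mem_trans hab.symm hbc hdb.symm hac hda.symm hcd.ne
        (threeCycle_mem_swap_left hab hbc hac h) hcdz
  · have hconj := mul_mem (mul_mem hcdz h) (inv_mem hcdz)
    rwa [mul_threeCycle_mul_inv, threeCycle_apply_of_ne hac hda.symm hza.symm,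
      threeCycle_apply_of_ne hbc hdb.symm hzb.symm, threeCycle_apply_left hcd.ne hzc.symm]
      at hconj

theorem threeCycle_mem_of_walk (hE : ∀ e ∈ E, e.card = 3)
    (hK : ContainsHyperedgeThreeCycles E K) {c d : V} (p : (underlyingGraph E).Walk c d) {a b : V}
    (hab : a ≠ b) (hbc : b ≠ c) (hac : a ≠ c) (h : threeCycle a b c ∈ K) (hda : d ≠ a)
    (hdb : d ≠ b) : threeCycle a b d ∈ K := by
  induction p generalizing a b with
  | nil => exact h
  | @cons c c' d hcc' p ih =>
    rcases eq_or_ne d c with rfl | hdc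
    · exact h
    rcases eq_or_ne c' a with rfl | hc'a
    · exact threeCycle_mem_swap_left hab.symm hda.symm hdb.symm <|
        threeCycle_mem_trans hab.symm hbc hdb.symm hac hda.symm hdc.symm
          (threeCycle_mem_swap_left hab hbc hac h)
          (ih hbc hac.symm hab.symm (by rwa [threeCycle_rotate hab hbc hac]) hdb hdc)
    rcases eq_or_ne c' b with rfl | hc'b
    · exact threeCycle_mem_trans hab hac hda.symm hbc hdb.symm hdc.symm h
        (ih hac hbc.symm hab (threeCycle_mem_swap_right hab hbc hac h) hda hdc)
    · exact ih hab hc'b.symm hc'a.symm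
        (threeCycle_mem_of_underlyingGraph_adj hE hK hab hbc hac h hcc' hc'a hc'b) hda hdb

theorem threeCycle_mem_of_underlyingGraph_reachable (hE : ∀ e ∈ E, e.card = 3)
    (hK : ContainsHyperedgeThreeCycles E K) {a b c : V} (hab : a ≠ b) (hbc : b ≠ c) (hac : a ≠ c)
    (hb : (underlyingGraph E).Reachable a b) (hc : (underlyingGraph E).Reachable a c) :
    threeCycle a b c ∈ K := by
  obtain ⟨p⟩ := hb
  cases p with
  | nil => exact absurd rfl hab
  | @cons _ a' _ haa' p =>
    obtain ⟨z, hza, hza', hz⟩ := exists_insert_mem_of_underlyingGraph_adj hE haa'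
    have haa'z := hK a a' z haa'.ne hza'.symm hza.symm hz
    obtain ⟨y, hya, hyb, hay, haby⟩ : ∃ y, y ≠ a ∧ y ≠ b ∧ (underlyingGraph E).Reachable a y ∧
        threeCycle a b y ∈ K := by
      rcases eq_or_ne b z with rfl | hbz
      · exact ⟨a', haa'.ne.symm, hza'.symm, haa'.reachable,
          threeCycle_mem_swap_right haa'.ne hza'.symm hab haa'z⟩
      · have haz : (underlyingGraph E).Adj a z := ⟨hza.symm, _, hz, by simp, by simp⟩
        exact ⟨z, hza, hbz.symm, haz.reachable, threeCycle_mem_swap_right hza.symm hbz.symm hab <|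
          threeCycle_mem_of_walk hE hK p hza.symm hza' haa'.ne
            (threeCycle_mem_swap_right haa'.ne hza'.symm hza.symm haa'z) hab.symm hbz⟩
    obtain ⟨q⟩ := hay.symm.trans hc
    exact threeCycle_mem_of_walk hE hK q hab hyb.symm hya.symm haby hac.symm hbc.symm

end Hypergraph

open scoped Classical in
/-- the subgroup of `Sym(V)` generated by the `3`-cycles `(a b c)` over the
hyperedges `{a,b,c} ∈ E` of a `3`-uniform hypergraph equals the set of permutations that move
every vertex within its connected component of the underlying graph and restrict to an even
permutation of each connected component. -/
theorem stmt10 {V : Type*} [Fintype V] [DecidableEq V] (E : Set (Finset V))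
    (hE : ∀ e ∈ E, e.card = 3) (g : Equiv.Perm V) :
    g ∈ Subgroup.closure {s : Equiv.Perm V | ∃ a b c : V,
        a ≠ b ∧ b ≠ c ∧ a ≠ c ∧ ({a, b, c} : Finset V) ∈ E ∧
        s = Equiv.swap a b * Equiv.swap b c} ↔
      ∃ hg : ∀ v, (underlyingGraph E).Reachable v (g v),
        ∀ v : V, Equiv.Perm.sign
          (g.subtypePerm (p := fun x => (underlyingGraph E).Reachable v x)
            (fun x => ⟨fun hvgx => hvgx.trans (hg x).symm, fun hvx => hvx.trans (hg x)⟩)) = 1 := by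
  refine ⟨fun hg => (Subgroup.closure_le (underlyingGraph E).evenOnComponents).2 ?_ hg,
    fun hg => SimpleGraph.evenOnComponents_le ?_ hg⟩
  · rintro _ ⟨a, b, c, hab, hbc, hac, h, rfl⟩
    have hadj {x y : V} (hx : x ∈ ({a, b, c} : Finset V)) (hy : y ∈ ({a, b, c} : Finset V))
        (hxy : x ≠ y) : (underlyingGraph E).Adj x y := ⟨hxy, _, h, hx, hy⟩
    exact SimpleGraph.threeCycle_mem_evenOnComponents hab hbc
      (hadj (by simp) (by simp) hab).reachable (hadj (by simp) (by simp) hac).reachable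
  · intro a b c hab hbc hac hb hc
    refine threeCycle_mem_of_underlyingGraph_reachable hE ?_ hab hbc hac hb hc
    exact fun a b c hab hbc hac h => Subgroup.subset_closure ⟨a, b, c, hab, hbc, hac, h, rfl⟩
end

section
/- Let A be a finite set and n ≥ 1. Then the group of conservative permutations of A^n equals the subgroup of Sym(A^n) generated by the transpositions (x·a·b·y x·b·a·y) exchanging a word x·a·b·y with the word x·b·a·y obtained by swapping two adjacent symbols (a, b ∈ A distinct, x, y words with |x|+|y| = n−2). -/
/-- The weight of a word `x ∈ A^n`: the number of occurrences of each symbol. -/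
def weight {A : Type*} [DecidableEq A] {n : ℕ} (x : Fin n → A) : A → ℕ :=
  fun a => (Finset.univ.filter fun i => x i = a).card

/-- A permutation of `A^n` is conservative if it preserves weights. -/
def IsConservative {A : Type*} [DecidableEq A] {n : ℕ} (f : Equiv.Perm (Fin n → A)) : Prop :=
  ∀ x, weight (f x) = weight x

/-- One move swapping the symbols in two adjacent coordinates. -/
def adjSwapStep {A : Type*} {n : ℕ} (u v : Fin n → A) : Prop :=
  ∃ (i : Fin n) (hi : (i : ℕ) + 1 < n),
    v = u ∘ (Equiv.swap i ⟨(i : ℕ) + 1, hi⟩)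

/-!
A transposition along an edge of a relation `r` only moves points inside their `r`-equivalence
class, and transpositions along edges generate the transposition of any two `r`-equivalent points;
on a finite type, the subgroup they generate is therefore the group of permutations preserving
every class. Two words have the same weight exactly when one is a rearrangement of the other, and
every rearrangement is a product of adjacent transpositions of positions, so the classes of
`adjSwapStep` are the weight classes.
-/

open Equiv Relation MulAction Subgroup

section SwapsAlong

variable {α : Type*} [DecidableEq α]

def swapsAlong (r : α → α → Prop) : Set (Perm α) :=
  {s | ∃ u v, r u v ∧ u ≠ v ∧ s = swap u v}

variable {r : α → α → Prop}

lemma isSwap_of_mem_swapsAlong {s : Perm α} (hs : s ∈ swapsAlong r) : s.IsSwap := by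
  obtain ⟨u, v, -, huv, rfl⟩ := hs
  exact ⟨u, v, huv, rfl⟩

lemma swap_mem_closure_swapsAlong {u v : α} (h : r u v) : swap u v ∈ closure (swapsAlong r) := by
  obtain rfl | huv := eq_or_ne u v
  · rw [swap_self]; exact one_mem _
  · exact subset_closure ⟨u, v, h, huv, rfl⟩

lemma eqvGen_apply_of_mem_closure_swapsAlong {g : Perm α} (hg : g ∈ closure (swapsAlong r))
    (x : α) : EqvGen r x (g x) := by
  induction hg using closure_induction generalizing x with
  | mem s hs =>
    obtain ⟨u, v, huv, -, rfl⟩ := hs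
    rcases eq_or_ne x u with rfl | hxu
    · rw [swap_apply_left]; exact .rel _ _ huv
    rcases eq_or_ne x v with rfl | hxv
    · rw [swap_apply_right]; exact .symm _ _ (.rel _ _ huv)
    · rw [swap_apply_of_ne_of_ne hxu hxv]; exact .refl x
  | one => exact .refl x
  | mul g h _ _ hg hh => exact .trans _ _ _ (hh x) (hg (h x))
  | inv g _ hg => simpa using EqvGen.symm _ _ (hg (g⁻¹ x))

lemma swap_mem_closure_swapsAlong_iff {x y : α} :
    swap x y ∈ closure (swapsAlong r) ↔ EqvGen r x y := by
  refine ⟨fun h ↦ ?_, fun h ↦ ?_⟩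
  · simpa using eqvGen_apply_of_mem_closure_swapsAlong h x
  induction h with
  | rel _ _ h => exact swap_mem_closure_swapsAlong h
  | refl x => rw [swap_self]; exact one_mem _
  | symm _ _ _ ih => rwa [swap_comm]
  | trans _ _ _ _ _ hxy hyz => exact SubmonoidClass.swap_mem_trans _ hxy hyz

theorem mem_closure_swapsAlong_iff [Finite α] {f : Perm α} :
    f ∈ closure (swapsAlong r) ↔ ∀ x, EqvGen r x (f x) := by
  rw [mem_closure_isSwap fun _ ↦ isSwap_of_mem_swapsAlong, and_iff_right (Set.toFinite _)]
  refine forall_congr' fun x ↦ ?_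
  rw [← swap_mem_closure_isSwap fun _ ↦ isSwap_of_mem_swapsAlong, swap_comm,
    swap_mem_closure_swapsAlong_iff]

end SwapsAlong

section Weight

variable {A : Type*} [DecidableEq A] {n : ℕ}

lemma weight_apply_eq_card_subtype (u : Fin n → A) (a : A) :
    weight u a = Fintype.card {i // u i = a} :=
  (Fintype.card_subtype _).symm

lemma weight_comp_perm (u : Fin n → A) (σ : Perm (Fin n)) : weight (u ∘ σ) = weight u := by
  funext a
  simp only [weight_apply_eq_card_subtype]
  exact Fintype.card_congr (σ.subtypeEquiv fun _ ↦ Iff.rfl)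

lemma exists_perm_comp_eq_of_weight_eq {u v : Fin n → A} (h : weight u = weight v) :
    ∃ σ : Perm (Fin n), u ∘ σ = v := by
  have fiber (a : A) : Fintype.card {i // v i = a} = Fintype.card {i // u i = a} := by
    rw [← weight_apply_eq_card_subtype, ← weight_apply_eq_card_subtype, h]
  exact ⟨ofFiberEquiv fun a ↦ Fintype.equivOfCardEq (fiber a),
    funext (ofFiberEquiv_map fun a ↦ Fintype.equivOfCardEq (fiber a))⟩

end Weight

section AdjSwapStep

variable {A : Type*} {n : ℕ}

lemma adjSwapStep_comp_swap_castSucc_succ {m : ℕ} (u : Fin (m + 1) → A) (i : Fin m) :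
    adjSwapStep u (u ∘ swap i.castSucc i.succ) :=
  ⟨i.castSucc, by simp, rfl⟩

lemma reflTransGen_adjSwapStep_comp_perm (u : Fin n → A) (σ : Perm (Fin n)) :
    ReflTransGen adjSwapStep u (u ∘ σ) := by
  cases n with
  | zero => rw [Subsingleton.elim (u ∘ σ) u]
  | succ m =>
    have hσ : σ ∈ Submonoid.closure (Set.range fun i : Fin m ↦ swap i.castSucc i.succ) := by
      rw [Perm.mclosure_swap_castSucc_succ]; trivial
    induction hσ using Submonoid.closure_induction generalizing u with
    | mem s hs =>
      obtain ⟨i, rfl⟩ := hs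
      exact .single (adjSwapStep_comp_swap_castSucc_succ u i)
    | one => exact .refl
    | mul σ τ _ _ hσ hτ => exact (hσ u).trans (hτ (u ∘ σ))

lemma weight_eq_iff_eqvGen_adjSwapStep [DecidableEq A] {u v : Fin n → A} :
    weight u = weight v ↔ EqvGen adjSwapStep u v := by
  refine ⟨fun h ↦ ?_, fun h ↦ ?_⟩
  · obtain ⟨σ, rfl⟩ := exists_perm_comp_eq_of_weight_eq h
    exact EqvGen.reflTransGen_le_eqvGen _ _ _ (reflTransGen_adjSwapStep_comp_perm u σ)
  induction h with
  | rel u v h => obtain ⟨i, _, rfl⟩ := h; exact (weight_comp_perm u _).symm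
  | refl => rfl
  | symm _ _ _ ih => exact ih.symm
  | trans _ _ _ _ _ ihuv ihvw => exact ihuv.trans ihvw

end AdjSwapStep

theorem stmt13_general (A : Type*) [Fintype A] [DecidableEq A] (n : ℕ)
    (f : Equiv.Perm (Fin n → A)) :
    IsConservative f ↔
      f ∈ Subgroup.closure {s : Equiv.Perm (Fin n → A) | ∃ u v : Fin n → A,
        adjSwapStep u v ∧ u ≠ v ∧ s = Equiv.swap u v} := by
  refine (forall_congr' fun x ↦ ?_).trans (mem_closure_swapsAlong_iff (r := adjSwapStep)).symm
  exact eq_comm.trans weight_eq_iff_eqvGen_adjSwapStep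

/-- the group of conservative permutations of `A^n` is exactly the subgroup of
`Sym(A^n)` generated by the transpositions of pairs of words differing by a swap of two
distinct adjacent symbols. -/
theorem stmt13 (A : Type*) [Fintype A] [DecidableEq A] (n : ℕ) (hn : 1 ≤ n)
    (f : Equiv.Perm (Fin n → A)) :
    IsConservative f ↔
      f ∈ Subgroup.closure {s : Equiv.Perm (Fin n → A) | ∃ u v : Fin n → A,
        adjSwapStep u v ∧ u ≠ v ∧ s = Equiv.swap u v} :=
  stmt13_general A n f
end

section
/- Let A be a finite set with |A| ≥ 2 and let n ≥ 2. Then the alternating group Alt(A^n) equals the subgroup of Sym(A^n) generated by the 3-cycles (u·a·b·v u·a·c·v u·d·b·v) of words, where a, b, c, d ∈ A with a ≠ d and b ≠ c, and u, v are words with |u|+|v| = n−2 (so the three words differ only in two consecutive coordinates). -/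
namespace Stmt14Aux
open Equiv Equiv.Perm Subgroup Function

variable {Ω : Type*} [DecidableEq Ω]

/-- the 3-cycle (a b c) : a ↦ b ↦ c ↦ a -/
def c3 (a b c : Ω) : Equiv.Perm Ω := Equiv.swap a b * Equiv.swap b c

lemma c3_fst {a b c : Ω} (hab : a ≠ b) (hac : a ≠ c) : c3 a b c a = b := by
  simp [c3, Perm.mul_apply, Equiv.swap_apply_of_ne_of_ne hab hac]

lemma c3_snd {a b c : Ω} (hca : c ≠ a) (hcb : c ≠ b) : c3 a b c b = c := by
  rw [c3, Perm.mul_apply, Equiv.swap_apply_left, Equiv.swap_apply_of_ne_of_ne hca hcb]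

lemma c3_thd {a b c : Ω} : c3 a b c c = a := by
  simp [c3, Perm.mul_apply]

lemma c3_other {a b c u : Ω} (h1 : u ≠ a) (h2 : u ≠ b) (h3 : u ≠ c) : c3 a b c u = u := by
  simp [c3, Perm.mul_apply, Equiv.swap_apply_of_ne_of_ne h2 h3,
    Equiv.swap_apply_of_ne_of_ne h1 h2]

lemma c3_inv (x y z : Ω) (hxy : x ≠ y) (hyz : y ≠ z) (hxz : x ≠ z) :
    (c3 x y z)⁻¹ = c3 x z y := by
  ext u
  simp only [c3, Perm.mul_apply, mul_inv_rev, swap_inv, Equiv.swap_apply_def]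
  split_ifs <;> simp_all

lemma c3_rot (x y z : Ω) (hxy : x ≠ y) (hyz : y ≠ z) (hxz : x ≠ z) :
    c3 x y z = c3 y z x := by
  ext u
  simp only [c3, Perm.mul_apply, Equiv.swap_apply_def]
  split_ifs <;> simp_all

lemma c3_split1 (x y z t : Ω) (hxy : x ≠ y) (hyz : y ≠ z) (hxz : x ≠ z)
    (htx : t ≠ x) (hty : t ≠ y) (htz : t ≠ z) :
    c3 x y z = c3 x t z * c3 x y t := by
  ext u
  rw [Perm.mul_apply]
  by_cases hux : u = x
  · subst hux
    rw [c3_fst hxy hxz, c3_fst hxy htx.symm, c3_other hxy.symm hty.symm hyz]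
  by_cases huy : u = y
  · subst huy
    rw [c3_snd hxz.symm hyz.symm, c3_snd htx hty, c3_snd hxz.symm htz.symm]
  by_cases huz : u = z
  · subst huz
    rw [c3_thd, c3_other hxz.symm hyz.symm htz.symm, c3_thd]
  by_cases hut : u = t
  · subst hut
    rw [c3_other htx hty htz, c3_thd, c3_fst htx.symm hxz]
  · rw [c3_other hux huy huz, c3_other hux huy hut, c3_other hux hut huz]

lemma c3_split2 (x y z t : Ω) (hxy : x ≠ y) (hyz : y ≠ z) (hxz : x ≠ z)
    (htx : t ≠ x) (hty : t ≠ y) (htz : t ≠ z) :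
    c3 x y z = c3 x y t * c3 t y z := by
  ext u
  rw [Perm.mul_apply]
  by_cases hux : u = x
  · subst hux
    rw [c3_fst hxy hxz, c3_other htx.symm hxy hxz, c3_fst hxy htx.symm]
  by_cases huy : u = y
  · subst huy
    rw [c3_snd hxz.symm hyz.symm, c3_snd htz.symm hyz.symm, c3_other hxz.symm hyz.symm htz.symm]
  by_cases huz : u = z
  · subst huz
    rw [c3_thd, c3_thd, c3_thd]
  by_cases hut : u = t
  · subst hut
    rw [c3_other htx hty htz, c3_fst hty htz, c3_snd htx hty]
  · rw [c3_other hux huy huz, c3_other hut huy huz, c3_other hux huy hut]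


section Words
variable {A : Type*} [DecidableEq A] {n : ℕ}
set_option linter.unusedSectionVars false

/-- Hamming distance between words -/
def Dst (x y : Fin n → A) : ℕ := (Finset.univ.filter fun j => x j ≠ y j).card

lemma dst_comm (x y : Fin n → A) : Dst x y = Dst y x := by
  unfold Dst
  congr 1
  ext j
  simp [ne_comm]

lemma dst_eq_zero {x y : Fin n → A} (h : Dst x y = 0) : x = y := by
  funext j
  by_contra hj
  have : j ∈ Finset.univ.filter fun j => x j ≠ y j := by simp [hj]
  rw [Finset.card_eq_zero.mp h] at this
  simp at this

lemma dst_pos {x y : Fin n → A} (h : x ≠ y) : 1 ≤ Dst x y :=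
  Nat.pos_of_ne_zero fun h0 => h (dst_eq_zero h0)

lemma dst_one_exists {x y : Fin n → A} (h : Dst x y = 1) :
    ∃ a, x a ≠ y a ∧ x = Function.update y a (x a) := by
  obtain ⟨a, ha⟩ := Finset.card_eq_one.mp h
  have hmem : ∀ j, x j ≠ y j ↔ j = a := by
    intro j
    rw [← Finset.mem_singleton, ← ha]
    simp
  refine ⟨a, (hmem a).mpr rfl, funext fun j => ?_⟩
  by_cases hj : j = a
  · subst hj; simp
  · rw [Function.update_apply, if_neg hj]
    by_contra hne
    exact hj ((hmem j).mp hne)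

lemma dst_update_one {z : Fin n → A} {k : Fin n} {c : A} (h : c ≠ z k) :
    Dst (Function.update z k c) z = 1 := by
  unfold Dst
  have : (Finset.univ.filter fun j => Function.update z k c j ≠ z j) = {k} := by
    ext j
    simp only [Finset.mem_filter, Finset.mem_univ, true_and, Finset.mem_singleton]
    by_cases hj : j = k
    · subst hj; simp [h]
    · simp [Function.update_apply, hj]
  rw [this]; simp

lemma dst_update_sub {y z : Fin n → A} {k : Fin n} (hk : y k ≠ z k) :
    Dst y (Function.update z k (y k)) = Dst y z - 1 := by
  unfold Dst
  have : (Finset.univ.filter fun j => y j ≠ Function.update z k (y k) j)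
      = (Finset.univ.filter fun j => y j ≠ z j).erase k := by
    ext j
    simp only [Finset.mem_filter, Finset.mem_univ, true_and, Finset.mem_erase]
    by_cases hj : j = k
    · subst hj; simp
    · simp [Function.update_apply, hj]
  rw [this, Finset.card_erase_of_mem (by simp [hk])]

lemma upd_ne {y : Fin n → A} {a : Fin n} {p : A} (h : p ≠ y a) :
    Function.update y a p ≠ y := by
  intro he
  exact h (by simpa using congrFun he a)

lemma upd_ne_upd {y : Fin n → A} {a b : Fin n} (hab : a ≠ b) {p q : A} (hp : p ≠ y a) :
    Function.update y a p ≠ Function.update y b q := by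
  intro he
  have := congrFun he a
  rw [Function.update_self, Function.update_of_ne hab] at this
  exact hp this

lemma upd_same_ne {y : Fin n → A} {a : Fin n} {p q : A} (hpq : p ≠ q) :
    Function.update y a p ≠ Function.update y a q := by
  intro he
  exact hpq (by simpa using congrFun he a)



section Main
variable [Fintype A]

lemma corner (hA : 2 ≤ Fintype.card A)
    (H : Subgroup (Equiv.Perm (Fin n → A)))
    (hgen : ∀ (i : Fin n) (hi : (i : ℕ) + 1 < n) (w : Fin n → A) (c d : A),
      c ≠ w ⟨(i : ℕ) + 1, hi⟩ → d ≠ w i →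
      c3 w (Function.update w ⟨(i : ℕ) + 1, hi⟩ c) (Function.update w i d) ∈ H) :
    ∀ (k : ℕ) (y : Fin n → A) (a b : Fin n) (p q : A), a ≠ b → p ≠ y a → q ≠ y b →
      (a : ℕ) - (b : ℕ) + ((b : ℕ) - (a : ℕ)) ≤ k →
      c3 y (Function.update y b q) (Function.update y a p) ∈ H := by
  intro k
  induction k with
  | zero =>
    intro y a b p q hab hp hq hd
    exact absurd (Fin.ext (by omega)) hab
  | succ k IH =>
    intro y a b p q hab hp hq hd
    have hAnt : Nontrivial A := Fintype.one_lt_card_iff_nontrivial.mp (by omega)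
    rcases lt_trichotomy (a : ℕ) (b : ℕ) with hlt | heq | hgt
    · by_cases hadj : (b : ℕ) = (a : ℕ) + 1
      · have hi : (a : ℕ) + 1 < n := hadj ▸ b.isLt
        have hb : b = ⟨(a : ℕ) + 1, hi⟩ := Fin.ext hadj
        subst hb
        exact hgen a hi y q p hq hp
      · have hm1 : (a : ℕ) + 1 < (b : ℕ) := by omega
        set m : Fin n := ⟨(a : ℕ) + 1, hm1.trans b.isLt⟩ with hm
        have hmv : (m : ℕ) = (a : ℕ) + 1 := rfl
        obtain ⟨r, hr⟩ := exists_ne (y m)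
        have ham : a ≠ m := by
          intro h
          have := congrArg Fin.val h
          rw [hmv] at this
          omega
        have hmb : m ≠ b := by
          intro h
          have := congrArg Fin.val h
          rw [hmv] at this
          omega
        rw [c3_split1 y (Function.update y b q) (Function.update y a p)
          (Function.update y m r) ((upd_ne hq).symm) (upd_ne_upd hab.symm hq)
          ((upd_ne hp).symm) (upd_ne hr) (upd_ne_upd hmb hr) (upd_ne_upd ham.symm hr)]
        exact mul_mem (IH y a m p r ham hp hr (by omega)) (IH y m b r q hmb hr hq (by omega))
    · exact absurd (Fin.ext heq) hab
    · by_cases hadj : (a : ℕ) = (b : ℕ) + 1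
      · have hi : (b : ℕ) + 1 < n := hadj ▸ a.isLt
        have hb : a = ⟨(b : ℕ) + 1, hi⟩ := Fin.ext hadj
        subst hb
        rw [show c3 y (Function.update y b q) (Function.update y ⟨(b : ℕ) + 1, hi⟩ p)
            = (c3 y (Function.update y ⟨(b : ℕ) + 1, hi⟩ p) (Function.update y b q))⁻¹ from
          (c3_inv _ _ _ ((upd_ne hp).symm)
            (upd_ne_upd (by intro h; exact absurd (congrArg Fin.val h) (by simp)) hp)
            ((upd_ne hq).symm)).symm]
        exact inv_mem (hgen b hi y p q hp hq)
      · have hm1 : (b : ℕ) + 1 < (a : ℕ) := by omega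
        set m : Fin n := ⟨(b : ℕ) + 1, hm1.trans a.isLt⟩ with hm
        have hmv : (m : ℕ) = (b : ℕ) + 1 := rfl
        obtain ⟨r, hr⟩ := exists_ne (y m)
        have ham : a ≠ m := by
          intro h
          have := congrArg Fin.val h
          rw [hmv] at this
          omega
        have hmb : m ≠ b := by
          intro h
          have := congrArg Fin.val h
          rw [hmv] at this
          omega
        rw [c3_split1 y (Function.update y b q) (Function.update y a p)
          (Function.update y m r) ((upd_ne hq).symm) (upd_ne_upd hab.symm hq)
          ((upd_ne hp).symm) (upd_ne hr) (upd_ne_upd hmb hr) (upd_ne_upd ham.symm hr)]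
        exact mul_mem (IH y a m p r ham hp hr (by omega)) (IH y m b r q hmb hr hq (by omega))

lemma collinear (hA : 2 ≤ Fintype.card A) (hn : 2 ≤ n)
    (H : Subgroup (Equiv.Perm (Fin n → A)))
    (hgen : ∀ (i : Fin n) (hi : (i : ℕ) + 1 < n) (w : Fin n → A) (c d : A),
      c ≠ w ⟨(i : ℕ) + 1, hi⟩ → d ≠ w i →
      c3 w (Function.update w ⟨(i : ℕ) + 1, hi⟩ c) (Function.update w i d) ∈ H)
    (y : Fin n → A) (a : Fin n) (p q : A) (hp : p ≠ y a) (hq : q ≠ y a) (hpq : p ≠ q) :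
    c3 y (Function.update y a q) (Function.update y a p) ∈ H := by
  have hAnt : Nontrivial A := Fintype.one_lt_card_iff_nontrivial.mp (by omega)
  have hFnt : Nontrivial (Fin n) :=
    Fintype.one_lt_card_iff_nontrivial.mp (by simp only [Fintype.card_fin]; omega)
  obtain ⟨b, hb⟩ := exists_ne a
  obtain ⟨r, hr⟩ := exists_ne (y b)
  rw [c3_split1 y (Function.update y a q) (Function.update y a p)
    (Function.update y b r) ((upd_ne hq).symm) (upd_same_ne hpq).symm
    ((upd_ne hp).symm) (upd_ne hr) (upd_ne_upd hb hr) (upd_ne_upd hb hr)]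
  exact mul_mem
    (corner hA H hgen ((a : ℕ) - (b : ℕ) + ((b : ℕ) - (a : ℕ))) y a b p r hb.symm hp hr le_rfl)
    (corner hA H hgen ((b : ℕ) - (a : ℕ) + ((a : ℕ) - (b : ℕ))) y b a r q hb hr hq le_rfl)

lemma dst_self (x : Fin n → A) : Dst x x = 0 := by simp [Dst]

lemma stepF2 (hA : 2 ≤ Fintype.card A) (hn : 2 ≤ n)
    (H : Subgroup (Equiv.Perm (Fin n → A)))
    (hgen : ∀ (i : Fin n) (hi : (i : ℕ) + 1 < n) (w : Fin n → A) (c d : A),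
      c ≠ w ⟨(i : ℕ) + 1, hi⟩ → d ≠ w i →
      c3 w (Function.update w ⟨(i : ℕ) + 1, hi⟩ c) (Function.update w i d) ∈ H)
    (x y z : Fin n → A) (hxy : x ≠ y) (hyz : y ≠ z) (hxz : x ≠ z)
    (h1 : Dst x y = 1) (h2 : Dst y z = 1) : c3 x y z ∈ H := by
  obtain ⟨a, ha, hxu⟩ := dst_one_exists h1
  obtain ⟨b, hb, hzu⟩ := dst_one_exists (show Dst z y = 1 by rwa [dst_comm] at h2)
  rw [c3_rot x y z hxy hyz hxz, hxu, hzu]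
  by_cases hab : a = b
  · subst hab
    refine collinear hA hn H hgen y a (x a) (z a) ha hb ?_
    intro h
    apply hxz
    rw [hxu, hzu, h]
  · exact corner hA H hgen _ y a b (x a) (z b) hab ha hb le_rfl

lemma stepF1 (hA : 2 ≤ Fintype.card A) (hn : 2 ≤ n)
    (H : Subgroup (Equiv.Perm (Fin n → A)))
    (hgen : ∀ (i : Fin n) (hi : (i : ℕ) + 1 < n) (w : Fin n → A) (c d : A),
      c ≠ w ⟨(i : ℕ) + 1, hi⟩ → d ≠ w i →
      c3 w (Function.update w ⟨(i : ℕ) + 1, hi⟩ c) (Function.update w i d) ∈ H) :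
    ∀ (k : ℕ) (x y z : Fin n → A), x ≠ y → y ≠ z → x ≠ z → Dst y z = 1 →
      Dst x y ≤ k → c3 x y z ∈ H := by
  intro k
  induction k with
  | zero =>
    intro x y z hxy _ _ _ hd
    exact absurd (dst_eq_zero (Nat.le_zero.mp hd)) hxy
  | succ k IH =>
    intro x y z hxy hyz hxz h1 hd
    by_cases hle : Dst x y ≤ k
    · exact IH x y z hxy hyz hxz h1 hle
    by_cases hone : Dst x y = 1
    · exact stepF2 hA hn H hgen x y z hxy hyz hxz hone h1
    have h2le : 2 ≤ Dst x y := by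
      have := dst_pos hxy
      omega
    obtain ⟨m1, hm1, m2, hm2, hmm⟩ := Finset.one_lt_card.mp (show 1 < Dst x y from h2le)
    rw [Finset.mem_filter] at hm1 hm2
    have htt : Function.update x m1 (y m1) ≠ Function.update x m2 (y m2) := by
      intro h
      have := congrFun h m1
      rw [Function.update_self, Function.update_of_ne hmm] at this
      exact hm1.2 this.symm
    have hpick : ∃ m : Fin n, x m ≠ y m ∧ Function.update x m (y m) ≠ z := by
      by_cases h : Function.update x m1 (y m1) = z
      · exact ⟨m2, hm2.2, fun he => htt (h.trans he.symm)⟩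
      · exact ⟨m1, hm1.2, h⟩
    obtain ⟨m, hm, htz⟩ := hpick
    set t := Function.update x m (y m) with htdef
    have htx : t ≠ x := upd_ne (Ne.symm hm)
    have h0 : Dst y t = Dst x y - 1 := by
      rw [htdef, dst_update_sub (Ne.symm hm), dst_comm]
    have hty : t ≠ y := by
      intro h
      rw [h, dst_self] at h0
      omega
    rw [c3_split2 x y z t hxy hyz hxz htx hty htz]
    refine mul_mem ?_ (IH t y z hty hyz htz h1 ?_)
    · rw [c3_rot x y t hxy hty.symm htx.symm]
      exact IH y t x hty.symm htx hxy.symm (dst_update_one (Ne.symm hm)) (by omega)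
    · rw [dst_comm]
      omega

lemma mainc3 (hA : 2 ≤ Fintype.card A) (hn : 2 ≤ n)
    (H : Subgroup (Equiv.Perm (Fin n → A)))
    (hgen : ∀ (i : Fin n) (hi : (i : ℕ) + 1 < n) (w : Fin n → A) (c d : A),
      c ≠ w ⟨(i : ℕ) + 1, hi⟩ → d ≠ w i →
      c3 w (Function.update w ⟨(i : ℕ) + 1, hi⟩ c) (Function.update w i d) ∈ H)
    (x y z : Fin n → A) (hxy : x ≠ y) (hyz : y ≠ z) (hxz : x ≠ z) :
    c3 x y z ∈ H := by
  suffices h : ∀ (k : ℕ) (x y z : Fin n → A), x ≠ y → y ≠ z → x ≠ z → Dst y z ≤ k →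
      c3 x y z ∈ H from h (Dst y z) x y z hxy hyz hxz le_rfl
  intro k
  induction k with
  | zero =>
    intro x y z _ hyz _ hd
    exact absurd (dst_eq_zero (Nat.le_zero.mp hd)) hyz
  | succ k IH =>
    intro x y z hxy hyz hxz hd
    by_cases hle : Dst y z ≤ k
    · exact IH x y z hxy hyz hxz hle
    by_cases hone : Dst y z = 1
    · exact stepF1 hA hn H hgen (Dst x y) x y z hxy hyz hxz hone le_rfl
    have h2le : 2 ≤ Dst y z := by
      have := dst_pos hyz
      omega
    obtain ⟨m1, hm1, m2, hm2, hmm⟩ := Finset.one_lt_card.mp (show 1 < Dst y z from h2le)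
    rw [Finset.mem_filter] at hm1 hm2
    have htt : Function.update z m1 (y m1) ≠ Function.update z m2 (y m2) := by
      intro h
      have := congrFun h m1
      rw [Function.update_self, Function.update_of_ne hmm] at this
      exact hm1.2 this
    have hpick : ∃ m : Fin n, y m ≠ z m ∧ Function.update z m (y m) ≠ x := by
      by_cases h : Function.update z m1 (y m1) = x
      · exact ⟨m2, hm2.2, fun he => htt (h.trans he.symm)⟩
      · exact ⟨m1, hm1.2, h⟩
    obtain ⟨m, hm, htx⟩ := hpick
    set t := Function.update z m (y m) with htdef
    have htz : t ≠ z := upd_ne hm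
    have h0 : Dst y t = Dst y z - 1 := by rw [htdef, dst_update_sub hm]
    have hty : t ≠ y := by
      intro h
      rw [h, dst_self] at h0
      omega
    rw [c3_split1 x y z t hxy hyz hxz htx hty htz]
    refine mul_mem ?_ (IH x y t hxy hty.symm htx.symm (by omega))
    exact stepF1 hA hn H hgen (Dst x t) x t z htx.symm htz hxz
      (dst_update_one hm) le_rfl

end Main
end Words

section Decomp
variable {Ω : Type*} [Fintype Ω] [DecidableEq Ω]

lemma isThreeCycle_eq_c3 {σ : Equiv.Perm Ω} (h : σ.IsThreeCycle) :
    ∃ x y z : Ω, x ≠ y ∧ y ≠ z ∧ x ≠ z ∧ σ = c3 x y z := by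
  have hc := h.card_support
  obtain ⟨x, hx⟩ := Finset.card_pos.mp (show 0 < σ.support.card by rw [hc]; norm_num)
  have hx' : σ x ≠ x := Equiv.Perm.mem_support.mp hx
  have hy : σ x ∈ σ.support := Equiv.Perm.apply_mem_support.mpr hx
  have hz : σ (σ x) ∈ σ.support := Equiv.Perm.apply_mem_support.mpr hy
  have hyz : σ x ≠ σ (σ x) := fun he => hx' (σ.injective he).symm
  have h3 : σ ^ 3 = 1 := by rw [← h.orderOf]; exact pow_orderOf_eq_one σ
  have hkey : σ (σ (σ x)) = x := by
    have h' : (σ ^ 3) x = x := by rw [h3]; rfl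
    simpa [pow_succ, pow_zero, Equiv.Perm.mul_apply, one_mul] using h'
  have hxz : x ≠ σ (σ x) := fun he => hx' ((congrArg σ he).trans hkey)
  have hsub : ({x, σ x, σ (σ x)} : Finset Ω) ⊆ σ.support := by
    intro u hu
    simp only [Finset.mem_insert, Finset.mem_singleton] at hu
    rcases hu with rfl | rfl | rfl <;> assumption
  have hcard : ({x, σ x, σ (σ x)} : Finset Ω).card = 3 := by
    rw [Finset.card_insert_of_notMem (by simp [Ne.symm hx', hxz]),
      Finset.card_insert_of_notMem (by simp [hyz]), Finset.card_singleton]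
  have hsupp : σ.support = {x, σ x, σ (σ x)} :=
    (Finset.eq_of_subset_of_card_le hsub (by rw [hc, hcard])).symm
  refine ⟨x, σ x, σ (σ x), Ne.symm hx', hyz, hxz, ?_⟩
  ext u
  by_cases h1 : u = x
  · subst h1
    rw [c3_fst (Ne.symm hx') hxz]
  by_cases h2 : u = σ x
  · subst h2
    rw [c3_snd hxz.symm hyz.symm]
  by_cases h3' : u = σ (σ x)
  · subst h3'
    rw [c3_thd]
    exact hkey
  · rw [c3_other h1 h2 h3']
    apply Equiv.Perm.notMem_support.mp
    rw [hsupp]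
    simp [h1, h2, h3']

end Decomp
end Stmt14Aux

/-- for `|A| ≥ 2` and `n ≥ 2`, the alternating group `Alt(A^n)` is exactly the
subgroup of `Sym(A^n)` generated by the `3`-cycles `(u·a·b·v, u·a·c·v, u·d·b·v)` of words
(`a ≠ d`, `b ≠ c`) differing only in two consecutive coordinates. -/
theorem stmt14 (A : Type*) [Fintype A] [DecidableEq A] (hA : 2 ≤ Fintype.card A)
    (n : ℕ) (hn : 2 ≤ n) (g : Equiv.Perm (Fin n → A)) :
    Equiv.Perm.sign g = 1 ↔
      g ∈ Subgroup.closure {s : Equiv.Perm (Fin n → A) |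
        ∃ (i : Fin n) (hi : (i : ℕ) + 1 < n) (w : Fin n → A) (c d : A),
          c ≠ w ⟨(i : ℕ) + 1, hi⟩ ∧ d ≠ w i ∧
          s = Equiv.swap w (Function.update w ⟨(i : ℕ) + 1, hi⟩ c) *
              Equiv.swap (Function.update w ⟨(i : ℕ) + 1, hi⟩ c) (Function.update w i d)} := by
  set S : Set (Equiv.Perm (Fin n → A)) := {s : Equiv.Perm (Fin n → A) |
        ∃ (i : Fin n) (hi : (i : ℕ) + 1 < n) (w : Fin n → A) (c d : A),
          c ≠ w ⟨(i : ℕ) + 1, hi⟩ ∧ d ≠ w i ∧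
          s = Equiv.swap w (Function.update w ⟨(i : ℕ) + 1, hi⟩ c) *
              Equiv.swap (Function.update w ⟨(i : ℕ) + 1, hi⟩ c) (Function.update w i d)} with hSdef
  have hgen : ∀ (i : Fin n) (hi : (i : ℕ) + 1 < n) (w : Fin n → A) (c d : A),
      c ≠ w ⟨(i : ℕ) + 1, hi⟩ → d ≠ w i →
      Stmt14Aux.c3 w (Function.update w ⟨(i : ℕ) + 1, hi⟩ c) (Function.update w i d)
        ∈ Subgroup.closure S :=
    fun i hi w c d h1 h2 => Subgroup.subset_closure ⟨i, hi, w, c, d, h1, h2, rfl⟩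
  constructor
  · intro hsgn
    have hga : g ∈ alternatingGroup (Fin n → A) := Equiv.Perm.mem_alternatingGroup.mpr hsgn
    rw [← Equiv.Perm.closure_three_cycles_eq_alternating] at hga
    refine (Subgroup.closure_le _).mpr ?_ hga
    intro σ hσ
    obtain ⟨x, y, z, hxy, hyz, hxz, rfl⟩ := Stmt14Aux.isThreeCycle_eq_c3 hσ
    exact Stmt14Aux.mainc3 hA hn _ hgen x y z hxy hyz hxz
  · intro hg
    have hle : Subgroup.closure S ≤ alternatingGroup (Fin n → A) := by
      rw [Subgroup.closure_le]
      rintro s ⟨i, hi, w, c, d, h1, h2, rfl⟩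
      have hcoord : (⟨(i : ℕ) + 1, hi⟩ : Fin n) ≠ i := by
        intro h
        exact absurd (congrArg Fin.val h) (by simp)
      have hww : w ≠ Function.update w ⟨(i : ℕ) + 1, hi⟩ c := (Stmt14Aux.upd_ne h1).symm
      have hww2 : Function.update w ⟨(i : ℕ) + 1, hi⟩ c ≠ Function.update w i d :=
        Stmt14Aux.upd_ne_upd hcoord h1
      show _ ∈ alternatingGroup (Fin n → A)
      rw [Equiv.Perm.mem_alternatingGroup, map_mul, Equiv.Perm.sign_swap hww,
        Equiv.Perm.sign_swap hww2]
      norm_num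
    exact Equiv.Perm.mem_alternatingGroup.mp (hle hg)
end

section
/- Let A be a finite set, let ℓ ∈ ℕ, and let G be a finite set of conservative gates, each an element of Sym(A^j) for some j ≤ ℓ. For n ≥ ℓ and a conservative permutation f of A^n, define the parity sequence φ(f) to be the function assigning to each weight class c of A^n the sign (as an element of ℤ/2) of the restriction of f to c. Then for every n ≥ ℓ, the image under φ of the subgroup of Sym(A^n) generated by all extensions to arity n of elements of G (every element of which is conservative) contains at most 2^{|G|} distinct parity sequences. -/
/-! The parity sequence is a homomorphism from the group of conservative permutations of `A^n`
to the abelian group `(A → ℕ) → ℤˣ`, in which every element squares to `1`. Since the target is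
abelian, conjugating by a wire permutation does not change it, so every extension of `G i` has the
parity sequence of `G i ⊕ id`. The image of the generated subgroup is therefore generated by `m`
elements of order at most `2`, hence consists of products over subsets of them. -/

open Equiv Finset

section Conservative

variable {A : Type*} [DecidableEq A]

lemma weight_comp_equiv {m n : ℕ} (x : Fin n → A) (e : Fin m ≃ Fin n) :
    weight (x ∘ e) = weight x := by
  funext a
  exact card_equiv e (by simp)

lemma weight_eq_add_splitEquiv {k ℓ : ℕ} (x : Fin (k + ℓ) → A) :
    weight x = weight (splitEquiv A k ℓ x).1 + weight (splitEquiv A k ℓ x).2 := by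
  funext a
  simp only [Pi.add_apply, weight, card_filter]
  rw [Fin.sum_univ_add]
  rfl

lemma isConservative_wirePerm {n : ℕ} (α : Perm (Fin n)) :
    IsConservative (wirePerm (A := A) α) :=
  fun x => weight_comp_equiv x α.symm

lemma IsConservative.oplusId {ℓ n : ℕ} (h : ℓ ≤ n) {f : Perm (Fin ℓ → A)}
    (hf : IsConservative f) : IsConservative (oplusId h f) := by
  set E := (arrowCongr (finCongr (Nat.add_sub_cancel' h).symm) (Equiv.refl A)).trans
    (splitEquiv A ℓ (n - ℓ))
  have hE (y : Fin n → A) : weight y = weight (E y).1 + weight (E y).2 := by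
    rw [trans_apply, ← weight_eq_add_splitEquiv]
    exact (weight_comp_equiv y _).symm
  intro x
  have hx : _root_.oplusId h f x = E.symm (f (E x).1, (E x).2) := rfl
  rw [hE (_root_.oplusId h f x), hE x, hx, apply_symm_apply, hf]

variable (A) in
def conservativeSubgroup (n : ℕ) : Subgroup (Perm (Fin n → A)) where
  carrier := {f | IsConservative f}
  mul_mem' {f g} hf hg x := by rw [Perm.mul_apply, hf, hg]
  one_mem' _ := rfl
  inv_mem' {f} hf x := by rw [← hf (f⁻¹ x), ← Perm.mul_apply, mul_inv_cancel, Perm.one_apply]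

lemma IsExtensionOf.isConservative {ℓ n : ℕ} {f : Perm (Fin ℓ → A)} {g : Perm (Fin n → A)}
    (hg : IsExtensionOf f g) (hf : IsConservative f) : IsConservative g := by
  obtain ⟨h, α, rfl⟩ := hg
  have hα : wirePerm α ∈ conservativeSubgroup A n := isConservative_wirePerm α
  exact mul_mem (mul_mem hα (hf.oplusId h)) (inv_mem hα)

end Conservative

section Parity

variable {A : Type*} [Fintype A] [DecidableEq A] {n : ℕ}

def paritySeq : conservativeSubgroup A n →* (A → ℕ) → ℤˣ :=
  MonoidHom.pi fun w => Perm.sign.comp <|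
    MonoidHom.mk' (fun f : conservativeSubgroup A n =>
      (f : Perm (Fin n → A)).subtypePerm (p := fun x => weight x = w) fun x => by rw [f.2 x])
      fun _ _ => rfl

lemma paritySeq_of_isExtensionOf {ℓ : ℕ} (h : ℓ ≤ n) {f : Perm (Fin ℓ → A)}
    {g : Perm (Fin n → A)} (hf : IsConservative f) (hg : IsExtensionOf f g) :
    paritySeq ⟨g, hg.isConservative hf⟩ = paritySeq ⟨oplusId h f, hf.oplusId h⟩ := by
  obtain ⟨-, α, rfl⟩ := hg
  let w : conservativeSubgroup A n := ⟨wirePerm α, isConservative_wirePerm α⟩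
  let o : conservativeSubgroup A n := ⟨oplusId h f, hf.oplusId h⟩
  calc paritySeq _ = paritySeq (w * o * w⁻¹) := rfl
    _ = paritySeq o := by simp only [map_mul, map_inv, mul_inv_cancel_comm]

end Parity

lemma Subgroup.closure_range_subset_range_prod {M ι : Type*} [CommGroup M] [Fintype ι]
    (hM : ∀ x : M, x ^ 2 = 1) (f : ι → M) :
    (closure (Set.range f) : Set M) ⊆ Set.range fun c : Finset ι => ∏ i ∈ c, f i := by
  intro x hx
  obtain ⟨a, rfl⟩ := exists_of_mem_closure_range f x hx
  refine ⟨univ.filter fun i => Odd (a i), ?_⟩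
  dsimp only
  rw [prod_filter]
  refine prod_congr rfl fun i _ => ?_
  rw [zpow_eq_zpow_emod' (a i) (hM (f i))]
  rcases Int.emod_two_eq_zero_or_one (a i) with h | h <;> simp [h, Int.odd_iff]

lemma Set.ncard_le_two_pow_of_subset_closure_range {M ι : Type*} [CommGroup M] [Fintype ι]
    (hM : ∀ x : M, x ^ 2 = 1) (f : ι → M) {S : Set M}
    (hS : S ⊆ Subgroup.closure (Set.range f)) : S.ncard ≤ 2 ^ Fintype.card ι := by
  calc S.ncard ≤ (Set.range fun c : Finset ι => ∏ i ∈ c, f i).ncard :=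
        ncard_le_ncard (hS.trans (Subgroup.closure_range_subset_range_prod hM f)) (finite_range _)
    _ ≤ Nat.card (Finset ι) := by
        rw [← Nat.card_coe_set_eq]; exact Finite.card_range_le _
    _ = 2 ^ Fintype.card ι := by simp

/-- for a finite set of conservative gates of arities at most `ℓ`, for every
`n ≥ ℓ` the parity sequences (the signs of the restrictions to the weight classes) of the
elements of the subgroup of `Sym(A^n)` generated by all extensions of the gates take at most
`2 ^ |G|` distinct values. -/
theorem stmt18 (A : Type*) [Fintype A] [DecidableEq A] (l : ℕ)
    (m : ℕ) (ar : Fin m → ℕ) (har : ∀ i, ar i ≤ l)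
    (G : ∀ i : Fin m, Equiv.Perm (Fin (ar i) → A)) (hG : ∀ i, IsConservative (G i))
    (n : ℕ) (hn : l ≤ n) :
    Set.ncard {s : (A → ℕ) → ℤˣ |
      ∃ f ∈ Subgroup.closure
        {g : Equiv.Perm (Fin n → A) | ∃ i : Fin m, IsExtensionOf (G i) g},
      ∃ hf : IsConservative f,
        s = fun w => Equiv.Perm.sign (f.subtypePerm (p := fun x => weight x = w)
          (fun x => by simp only [hf x]))} ≤ 2 ^ m := by
  set s : Fin m → (A → ℕ) → ℤˣ := fun i =>
    paritySeq ⟨oplusId ((har i).trans hn) (G i), (hG i).oplusId _⟩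
  have hle : Subgroup.closure {g : Perm (Fin n → A) | ∃ i, IsExtensionOf (G i) g} ≤
      ((Subgroup.closure (Set.range s)).comap paritySeq).map
        (conservativeSubgroup A n).subtype := by
    rw [Subgroup.closure_le]
    rintro g ⟨i, hg⟩
    exact ⟨⟨g, hg.isConservative (hG i)⟩,
      Subgroup.subset_closure ⟨i, (paritySeq_of_isExtensionOf _ (hG i) hg).symm⟩, rfl⟩
  have hsq (x : (A → ℕ) → ℤˣ) : x ^ 2 = 1 := funext fun w => Int.units_sq (x w)
  refine (Set.ncard_le_two_pow_of_subset_closure_range hsq s ?_).trans_eq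
    (by rw [Fintype.card_fin])
  rintro _ ⟨f, hf, -, rfl⟩
  obtain ⟨f', hf', rfl⟩ := hle hf
  exact hf'
end
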